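/- arXiv:nlin/0108049 — 2 statements merged into one kernel-verified Lean document; each statement's English description precedes it below -/
import Mathlib

section
/- Assume γ(n) ≠ 0 for all n ∈ ℤ, and assume there exist nonzero complex constants u and v such that α_{d2}(n) = v·∏_{j=1}^{d2} γ(n−j) and β_{d1}(n) = u·∏_{j=1}^{d1} γ(n−j) for all n ∈ ℤ (so in particular α_{d2}(n) ≠ 0 and β_{d1}(n) ≠ 0 for all n). Then for every N ∈ ℤ and all x, y ∈ ℂ the following identity of characteristic polynomials holds: u·det(x·1_{d1+1} − D̲2_N(y)) = v·det(y·1_{d2+1} − D1_N(x)). -/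
open Matrix BigOperators

noncomputable def aMat (d2 : ℕ) (α : ℤ → ℤ → ℂ) (γ : ℤ → ℂ) (N : ℤ) (x : ℂ) :
    Matrix (Fin (d2 + 1)) (Fin (d2 + 1)) ℂ :=
  Matrix.of fun i b =>
    if (i : ℕ) < d2 then (if (b : ℕ) = (i : ℕ) + 1 then 1 else 0)
    else if (b : ℕ) = d2 then (x - α 0 N) / γ N
    else -α ((d2 : ℤ) - ((b : ℕ) : ℤ)) N / γ N

noncomputable def aProd (d2 : ℕ) (α : ℤ → ℤ → ℂ) (γ : ℤ → ℂ) (N : ℤ) (x : ℂ) :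
    ℕ → Matrix (Fin (d2 + 1)) (Fin (d2 + 1)) ℂ
  | 0 => 1
  | j + 1 => aMat d2 α γ (N + (j : ℤ)) x * aProd d2 α γ N x j

noncomputable def abarMat (d2 : ℕ) (α : ℤ → ℤ → ℂ) (γ : ℤ → ℂ) (N : ℤ) (x : ℂ) :
    Matrix (Fin (d2 + 1)) (Fin (d2 + 1)) ℂ :=
  Matrix.of fun i b =>
    if (b : ℕ) = 0 then
      (if (i : ℕ) = 0 then (x - α 0 N) / γ (N - 1)
       else -α ((i : ℕ) : ℤ) (N + ((i : ℕ) : ℤ)) / γ (N - 1))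
    else if (b : ℕ) = (i : ℕ) + 1 then 1 else 0

noncomputable def abarProd (d2 : ℕ) (α : ℤ → ℤ → ℂ) (γ : ℤ → ℂ) (N : ℤ) (x : ℂ) :
    ℕ → Matrix (Fin (d2 + 1)) (Fin (d2 + 1)) ℂ
  | 0 => 1
  | j + 1 => abarProd d2 α γ N x j * abarMat d2 α γ (N - 1 - (j : ℤ)) x

noncomputable def D1Mat (d1 d2 : ℕ) (α β : ℤ → ℤ → ℂ) (γ : ℤ → ℂ) (N : ℤ) (x : ℂ) :
    Matrix (Fin (d2 + 1)) (Fin (d2 + 1)) ℂ :=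
  Matrix.diagonal (fun i : Fin _ => γ (N - (d2 : ℤ) - 1 + ((i : ℕ) : ℤ))) * (aMat d2 α γ (N - 1) x)⁻¹
    + Matrix.diagonal (fun i : Fin _ => β 0 (N - (d2 : ℤ) + ((i : ℕ) : ℤ)))
    + ∑ j ∈ Finset.Icc 1 d1,
        Matrix.diagonal (fun i : Fin _ => β (j : ℤ) (N + (j : ℤ) - (d2 : ℤ) + ((i : ℕ) : ℤ)))
          * aProd d2 α γ N x j

noncomputable def D2barMat (d1 d2 : ℕ) (α β : ℤ → ℤ → ℂ) (γ : ℤ → ℂ) (N : ℤ) (y : ℂ) :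
    Matrix (Fin (d1 + 1)) (Fin (d1 + 1)) ℂ :=
  (abarMat d1 β γ N y)⁻¹ * Matrix.diagonal (fun i : Fin _ => γ (N - 1 + ((i : ℕ) : ℤ)))
    + Matrix.diagonal (fun i : Fin _ => α 0 (N - 1 + ((i : ℕ) : ℤ)))
    + ∑ j ∈ Finset.Icc 1 d2,
        abarProd d1 β γ N y j * Matrix.diagonal (fun i : Fin _ => α (j : ℤ) (N - 1 + ((i : ℕ) : ℤ)))


noncomputable def Krow (d2 : ℕ) (α : ℤ → ℤ → ℂ) (γ : ℤ → ℂ) (N : ℤ) (x : ℂ) (r : ℕ) :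
    Fin (d2 + 1) → ℂ :=
  if r ≤ d2 then (fun c => if (c : ℕ) = r then 1 else 0)
  else aProd d2 α γ (N - 1) x (r - d2) (Fin.last d2)

section
variable (d1 d2 : ℕ) (α β : ℤ → ℤ → ℂ) (γ : ℤ → ℂ) (N : ℤ) (x y : ℂ)

lemma Krow_spec : ∀ (k : ℕ) (i : Fin (d2 + 1)) (c : Fin (d2 + 1)),
    aProd d2 α γ (N - 1) x k i c = Krow d2 α γ N x (k + (i : ℕ)) c := by
  intro k
  induction k with
  | zero =>
    intro i c
    have hi : (i : ℕ) ≤ d2 := Nat.lt_succ_iff.mp i.isLt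
    simp only [aProd, Krow, Nat.zero_add, if_pos hi, Matrix.one_apply]
    by_cases h : i = c
    · simp [h]
    · have : ¬ ((c : ℕ) = (i : ℕ)) := fun hc => h (Fin.ext hc.symm)
      simp [h, this]
  | succ k ih =>
    intro i c
    by_cases hi : (i : ℕ) < d2
    · -- shift row
      have hstep : aProd d2 α γ (N - 1) x (k + 1) i c
          = aProd d2 α γ (N - 1) x k (⟨(i : ℕ) + 1, by omega⟩ : Fin (d2 + 1)) c := by
        rw [aProd, Matrix.mul_apply]
        have hcol : ∀ b : Fin (d2 + 1),
            aMat d2 α γ (N - 1 + (k : ℤ)) x i b * aProd d2 α γ (N - 1) x k b c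
            = if b = (⟨(i : ℕ) + 1, by omega⟩ : Fin (d2 + 1))
              then aProd d2 α γ (N - 1) x k b c else 0 := by
          intro b
          by_cases hb : b = (⟨(i : ℕ) + 1, by omega⟩ : Fin (d2 + 1))
          · subst hb; simp [aMat, hi]
          · have hb' : ¬ ((b : ℕ) = (i : ℕ) + 1) := fun hc => hb (Fin.ext hc)
            simp [aMat, hi, hb', hb]
        simp only [hcol]
        rw [Finset.sum_ite_eq' Finset.univ]
        simp
      rw [hstep, ih]
      congr 1
      simp only [Fin.val_mk]
      omega
    · -- i = last
      have hie : (i : ℕ) = d2 := by omega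
      have hil : i = Fin.last d2 := Fin.ext (by simpa using hie)
      rw [hil, Krow]
      have h1 : ¬ (k + 1 + (Fin.last d2 : ℕ) ≤ d2) := by simp [Fin.last]
      rw [if_neg h1]
      congr 1
      simp [Fin.last]

lemma EqnA (hγ : ∀ n : ℤ, γ n ≠ 0) :
    ∀ (k : ℕ) (c : Fin (d2 + 1)),
    γ (N - 1 + (k : ℤ)) * Krow d2 α γ N x (k + (d2 + 1)) c
      + ∑ q ∈ Finset.range (d2 + 1), α ((d2 : ℤ) - (q : ℤ)) (N - 1 + (k : ℤ))
          * Krow d2 α γ N x (k + q) c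
      = x * Krow d2 α γ N x (k + d2) c := by
  intro k c
  set M := N - 1 + (k : ℤ) with hM
  have hK : Krow d2 α γ N x (k + (d2 + 1)) c
      = aProd d2 α γ (N - 1) x (k + 1) (Fin.last d2) c := by
    have h0 : aProd d2 α γ (N - 1) x (k + 1) (Fin.last d2) c
        = Krow d2 α γ N x ((k + 1) + (Fin.last d2 : ℕ)) c := Krow_spec d2 α γ N x (k+1) _ c
    rw [h0]; congr 1; simp [Fin.last]; omega
  rw [hK, aProd, Matrix.mul_apply]
  have hlast : ¬ ((Fin.last d2 : ℕ) < d2) := by simp [Fin.last]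
  have hterm : ∀ b : Fin (d2 + 1),
      aMat d2 α γ (N - 1 + (k : ℤ)) x (Fin.last d2) b * aProd d2 α γ (N - 1) x k b c
      = (if (b : ℕ) = d2 then (x - α 0 M) / γ M
         else -α ((d2 : ℤ) - ((b : ℕ) : ℤ)) M / γ M)
        * Krow d2 α γ N x (k + (b : ℕ)) c := by
    intro b
    rw [Krow_spec d2 α γ N x k b c]
    congr 1
    simp [aMat, hlast, hM]
  simp only [hterm]
  rw [Fin.sum_univ_castSucc]
  have hlast2 : ((Fin.last d2 : Fin (d2+1)) : ℕ) = d2 := rfl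
  rw [hlast2]
  have hsmall : ∀ b : Fin d2,
      (if ((b.castSucc : Fin (d2+1)) : ℕ) = d2 then (x - α 0 M) / γ M
         else -α ((d2 : ℤ) - (((b.castSucc : Fin (d2+1)) : ℕ) : ℤ)) M / γ M)
        * Krow d2 α γ N x (k + ((b.castSucc : Fin (d2+1)) : ℕ)) c
      = -α ((d2 : ℤ) - ((b : ℕ) : ℤ)) M / γ M * Krow d2 α γ N x (k + (b : ℕ)) c := by
    intro b
    have : ¬ (((b.castSucc : Fin (d2+1)) : ℕ) = d2) := by
      simp only [Fin.coe_castSucc]; exact Nat.ne_of_lt b.isLt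
    rw [if_neg this]
    simp only [Fin.coe_castSucc]
  simp only [hsmall]
  rw [Fin.sum_univ_eq_sum_range
    (fun q => -α ((d2 : ℤ) - (q : ℤ)) M / γ M * Krow d2 α γ N x (k + q) c) d2]
  rw [Finset.sum_range_succ]
  have hM0 : ((d2 : ℤ) - ((d2 : ℕ) : ℤ)) = 0 := by simp
  rw [hM0]
  have hgm := hγ M
  have hgs : γ M * ∑ q ∈ Finset.range d2,
      -α ((d2 : ℤ) - (q : ℤ)) M / γ M * Krow d2 α γ N x (k + q) c
      = ∑ q ∈ Finset.range d2, -(α ((d2 : ℤ) - (q : ℤ)) M * Krow d2 α γ N x (k + q) c) := by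
    rw [Finset.mul_sum]
    refine Finset.sum_congr rfl (fun q _ => ?_)
    field_simp
  rw [mul_add, hgs]
  have hgx : γ M * ((x - α 0 M) / γ M * Krow d2 α γ N x (k + d2) c)
      = (x - α 0 M) * Krow d2 α γ N x (k + d2) c := by
    field_simp
  simp only [eq_self_iff_true, if_true]
  rw [hgx, Finset.sum_neg_distrib]
  ring

end
noncomputable def Kbar (d1 : ℕ) (β : ℤ → ℤ → ℂ) (γ : ℤ → ℂ) (N : ℤ) (y : ℂ) (s : ℕ) :
    Fin (d1 + 1) → ℂ :=
  if s ≤ d1 then (fun l => if (l : ℕ) = d1 - s then 1 else 0)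
  else (fun l => abarProd d1 β γ (N + 1) y (s - d1) l ⟨0, Nat.succ_pos d1⟩)

section
variable (d1 : ℕ) (β : ℤ → ℤ → ℂ) (γ : ℤ → ℂ) (N : ℤ) (y : ℂ)

lemma Kbar_spec : ∀ (k : ℕ) (i : Fin (d1 + 1)) (l : Fin (d1 + 1)),
    abarProd d1 β γ (N + 1) y k l i = Kbar d1 β γ N y (k + (d1 - (i : ℕ))) l := by
  intro k
  induction k with
  | zero =>
    intro i l
    have hi : (i : ℕ) ≤ d1 := Nat.lt_succ_iff.mp i.isLt
    have hs : d1 - (d1 - (i : ℕ)) = (i : ℕ) := by omega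
    simp only [abarProd, Kbar, Nat.zero_add, if_pos (Nat.sub_le d1 (i : ℕ)),
      Matrix.one_apply, hs]
    by_cases h : l = i
    · simp [h]
    · have : ¬ ((l : ℕ) = (i : ℕ)) := fun hc => h (Fin.ext hc)
      simp [h, this]
  | succ k ih =>
    intro i l
    by_cases hi : (i : ℕ) = 0
    · have hie : i = (⟨0, Nat.succ_pos d1⟩ : Fin (d1 + 1)) := Fin.ext (by simpa using hi)
      subst hie
      rw [Kbar]
      have h1 : ¬ (k + 1 + (d1 - 0) ≤ d1) := by omega
      rw [if_neg h1]
      have h2 : k + 1 + (d1 - 0) - d1 = k + 1 := by omega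
      rw [h2]
    · -- column shift
      obtain ⟨i', hi'⟩ : ∃ i' : ℕ, (i : ℕ) = i' + 1 := ⟨(i : ℕ) - 1, by omega⟩
      have hstep : abarProd d1 β γ (N + 1) y (k + 1) l i
          = abarProd d1 β γ (N + 1) y k l (⟨i', by omega⟩ : Fin (d1 + 1)) := by
        rw [abarProd, Matrix.mul_apply]
        have hcol : ∀ b : Fin (d1 + 1),
            abarProd d1 β γ (N + 1) y k l b * abarMat d1 β γ (N + 1 - 1 - (k : ℤ)) y b i
            = if b = (⟨i', by omega⟩ : Fin (d1 + 1))
              then abarProd d1 β γ (N + 1) y k l b else 0 := by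
          intro b
          by_cases hb : b = (⟨i', by omega⟩ : Fin (d1 + 1))
          · subst hb
            have : (i : ℕ) = ((⟨i', by omega⟩ : Fin (d1 + 1)) : ℕ) + 1 := by
              simp only [Fin.val_mk]; omega
            simp [abarMat, hi, this, (show i ≠ 0 from fun h => hi (by simp [h]))]
          · have hb' : ¬ ((i : ℕ) = (b : ℕ) + 1) := by
              intro hc
              apply hb; apply Fin.ext; simp only [Fin.val_mk]; omega
            simp [abarMat, hi, hb', hb, (show i ≠ 0 from fun h => hi (by simp [h]))]
        simp only [hcol]
        rw [Finset.sum_ite_eq' Finset.univ]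
        simp
      rw [hstep, ih]
      congr 1
      simp only [Fin.val_mk]
      omega

lemma EqnB (hγ : ∀ n : ℤ, γ n ≠ 0) :
    ∀ (k : ℕ) (l : Fin (d1 + 1)),
    γ (N - 1 - (k : ℤ)) * Kbar d1 β γ N y (d1 + 1 + k) l
      + ∑ j ∈ Finset.range (d1 + 1), β (j : ℤ) (N - (k : ℤ) + (j : ℤ))
          * Kbar d1 β γ N y (k + (d1 - j)) l
      = y * Kbar d1 β γ N y (k + d1) l := by
  intro k l
  have hK : Kbar d1 β γ N y (d1 + 1 + k) l
      = abarProd d1 β γ (N + 1) y (k + 1) l ⟨0, Nat.succ_pos d1⟩ := by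
    rw [Kbar]
    have h1 : ¬ (d1 + 1 + k ≤ d1) := by omega
    rw [if_neg h1]
    have h2 : d1 + 1 + k - d1 = k + 1 := by omega
    rw [h2]
  rw [hK, abarProd, Matrix.mul_apply]
  have hM : N + 1 - 1 - (k : ℤ) = N - (k : ℤ) := by ring
  have hterm : ∀ b : Fin (d1 + 1),
      abarProd d1 β γ (N + 1) y k l b
        * abarMat d1 β γ (N + 1 - 1 - (k : ℤ)) y b ⟨0, Nat.succ_pos d1⟩
      = Kbar d1 β γ N y (k + (d1 - (b : ℕ))) l
        * (if (b : ℕ) = 0 then (y - β 0 (N - (k : ℤ))) / γ (N - (k : ℤ) - 1)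
           else -β ((b : ℕ) : ℤ) (N - (k : ℤ) + ((b : ℕ) : ℤ)) / γ (N - (k : ℤ) - 1)) := by
    intro b
    rw [Kbar_spec d1 β γ N y k b l]
    congr 1
    simp only [abarMat, Matrix.of_apply, Fin.val_mk, hM]
    norm_num
  simp only [hterm]
  rw [Fin.sum_univ_succ]
  simp only [Fin.val_zero, eq_self_iff_true, if_true]
  have hsmall : ∀ b : Fin d1,
      Kbar d1 β γ N y (k + (d1 - ((b.succ : Fin (d1+1)) : ℕ))) l
        * (if ((b.succ : Fin (d1+1)) : ℕ) = 0 then (y - β 0 (N - (k : ℤ))) / γ (N - (k : ℤ) - 1)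
           else -β (((b.succ : Fin (d1+1)) : ℕ) : ℤ) (N - (k : ℤ) + (((b.succ : Fin (d1+1)) : ℕ) : ℤ))
             / γ (N - (k : ℤ) - 1))
      = Kbar d1 β γ N y (k + (d1 - ((b : ℕ) + 1))) l
        * (-β (((b : ℕ) : ℤ) + 1) (N - (k : ℤ) + ((b : ℕ) + 1 : ℤ)) / γ (N - (k : ℤ) - 1)) := by
    intro b
    have h1 : ((b.succ : Fin (d1+1)) : ℕ) = (b : ℕ) + 1 := rfl
    rw [h1, if_neg (Nat.succ_ne_zero _)]
    norm_num
  simp only [hsmall]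
  rw [Fin.sum_univ_eq_sum_range
    (fun j => Kbar d1 β γ N y (k + (d1 - (j + 1))) l
        * (-β ((j : ℤ) + 1) (N - (k : ℤ) + ((j : ℤ) + 1)) / γ (N - (k : ℤ) - 1))) d1]
  -- RHS sum : split first term j = 0
  rw [Finset.sum_range_succ' (fun j => β (j : ℤ) (N - (k : ℤ) + (j : ℤ))
          * Kbar d1 β γ N y (k + (d1 - j)) l) d1]
  have hgm := hγ (N - (k : ℤ) - 1)
  have hNk : N - 1 - (k : ℤ) = N - (k : ℤ) - 1 := by ring
  rw [hNk]
  simp only [Nat.sub_zero, Nat.cast_zero, Nat.cast_ofNat, add_zero]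
  have hgs : γ (N - (k : ℤ) - 1) * ∑ j ∈ Finset.range d1,
      Kbar d1 β γ N y (k + (d1 - (j + 1))) l
        * (-β ((j : ℤ) + 1) (N - (k : ℤ) + ((j : ℤ) + 1)) / γ (N - (k : ℤ) - 1))
      = ∑ j ∈ Finset.range d1, -(β (((j:ℕ) + 1 : ℕ) : ℤ) (N - (k : ℤ) + (((j:ℕ) + 1 : ℕ) : ℤ))
          * Kbar d1 β γ N y (k + (d1 - (j + 1))) l) := by
    rw [Finset.mul_sum]
    refine Finset.sum_congr rfl (fun j _ => ?_)
    push_cast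
    field_simp
  have hgy : γ (N - (k : ℤ) - 1) * (Kbar d1 β γ N y (k + d1) l
      * ((y - β 0 (N - (k : ℤ))) / γ (N - (k : ℤ) - 1)))
      = (y - β 0 (N - (k : ℤ))) * Kbar d1 β γ N y (k + d1) l := by
    field_simp
  rw [mul_add, hgs, hgy, Finset.sum_neg_distrib]
  push_cast
  ring

section
variable (d1 d2 : ℕ) (α β : ℤ → ℤ → ℂ) (γ : ℤ → ℂ) (M N : ℤ) (x y : ℂ)

lemma aProd_mul_aMat : ∀ j : ℕ,
    aProd d2 α γ (M + 1) x j * aMat d2 α γ M x = aProd d2 α γ M x (j + 1) := by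
  intro j
  induction j with
  | zero =>
    show (1 : Matrix _ _ ℂ) * aMat d2 α γ M x = aMat d2 α γ (M + (0:ℕ)) x * aProd d2 α γ M x 0
    show (1 : Matrix _ _ ℂ) * aMat d2 α γ M x = aMat d2 α γ (M + ((0:ℕ):ℤ)) x * aProd d2 α γ M x 0
    simp [aProd]
  | succ j ih =>
    show (aMat d2 α γ (M + 1 + (j:ℤ)) x * aProd d2 α γ (M + 1) x j) * aMat d2 α γ M x
        = aMat d2 α γ (M + ((j+1 : ℕ):ℤ)) x * aProd d2 α γ M x (j + 1)
    rw [mul_assoc, ih]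
    congr 2
    push_cast
    ring

lemma abarMat_mul_abarProd : ∀ j : ℕ,
    abarMat d1 β γ M y * abarProd d1 β γ M y j = abarProd d1 β γ (M + 1) y (j + 1) := by
  intro j
  induction j with
  | zero =>
    show abarMat d1 β γ M y * 1 = abarProd d1 β γ (M+1) y 0 * abarMat d1 β γ (M + 1 - 1 - ((0:ℕ):ℤ)) y
    simp [abarProd]
  | succ j ih =>
    show abarMat d1 β γ M y * (abarProd d1 β γ M y j * abarMat d1 β γ (M - 1 - (j:ℤ)) y)
        = abarProd d1 β γ (M+1) y (j+1) * abarMat d1 β γ (M + 1 - 1 - ((j+1 : ℕ):ℤ)) y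
    rw [← mul_assoc, ih]
    congr 2
    push_cast
    ring

lemma det_aMat (hd2 : 1 ≤ d2) :
    (aMat d2 α γ M x).det = (-1) ^ (d2 + 1) * α (d2 : ℤ) M / γ M := by
  rw [Matrix.det_succ_column_zero (aMat d2 α γ M x)]
  rw [Finset.sum_eq_single (Fin.last d2)]
  · have hlast : ¬ ((Fin.last d2 : ℕ) < d2) := by simp [Fin.last]
    have h0 : ¬ (((0 : Fin (d2+1)) : ℕ) = d2) := by simp; omega
    have hsub : (aMat d2 α γ M x).submatrix (Fin.last d2).succAbove Fin.succ = 1 := by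
      ext i j
      simp only [Matrix.submatrix_apply, Fin.succAbove_last, aMat, Matrix.of_apply]
      have hi : ((i.castSucc : Fin (d2+1)) : ℕ) = (i : ℕ) := rfl
      have hj : ((j.succ : Fin (d2+1)) : ℕ) = (j : ℕ) + 1 := rfl
      rw [hi, hj, if_pos i.isLt]
      by_cases h : i = j
      · subst h; simp [Matrix.one_apply]
      · have h1 : ¬ ((j : ℕ) + 1 = (i : ℕ) + 1) := by
          intro hc; exact h (Fin.ext (by omega))
        have h2 : ¬ (i = j) := h
        simp [Matrix.one_apply, h1, h2]; omega
    rw [hsub, Matrix.det_one]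
    have hentry : aMat d2 α γ M x (Fin.last d2) 0 = -α ((d2:ℤ) - ((0:ℕ):ℤ)) M / γ M := by
      simp only [aMat, Matrix.of_apply, hlast, if_neg hlast]
      rw [if_neg h0]
      simp
    rw [hentry]
    have : ((Fin.last d2 : Fin (d2+1)) : ℕ) = d2 := rfl
    rw [this]
    simp [pow_succ]
    ring
  · intro b _ hb
    have hblt : (b : ℕ) < d2 := by
      have := b.isLt
      rcases Nat.lt_succ_iff_lt_or_eq.mp this with h | h
      · exact h
      · exact absurd (Fin.ext (by simp [Fin.last, h])) hb
    have : aMat d2 α γ M x b 0 = 0 := by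
      simp only [aMat, Matrix.of_apply, if_pos hblt]
      have : ¬ (((0 : Fin (d2+1)) : ℕ) = (b:ℕ) + 1) := by simp
      rw [if_neg this]
    rw [this]; ring
  · intro h; exact absurd (Finset.mem_univ _) h

lemma det_abarMat (hd1 : 1 ≤ d1) :
    (abarMat d1 β γ M y).det = (-1) ^ (d1 + 1) * β (d1 : ℤ) (M + (d1 : ℤ)) / γ (M - 1) := by
  rw [Matrix.det_succ_row (abarMat d1 β γ M y) (Fin.last d1)]
  rw [Finset.sum_eq_single (0 : Fin (d1+1))]
  · have hlast : ((Fin.last d1 : Fin (d1+1)) : ℕ) = d1 := rfl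
    have hsub : (abarMat d1 β γ M y).submatrix (Fin.last d1).succAbove (0 : Fin (d1+1)).succAbove
        = 1 := by
      ext i j
      simp only [Matrix.submatrix_apply, Fin.succAbove_last, abarMat, Matrix.of_apply]
      have hj' : (0 : Fin (d1+1)).succAbove j = j.succ := rfl
      rw [hj']
      have hi : ((i.castSucc : Fin (d1+1)) : ℕ) = (i : ℕ) := rfl
      have hj : ((j.succ : Fin (d1+1)) : ℕ) = (j : ℕ) + 1 := rfl
      rw [hi, hj, if_neg (Nat.succ_ne_zero _)]
      by_cases h : i = j
      · subst h; simp [Matrix.one_apply]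
      · have h1 : ¬ ((j : ℕ) + 1 = (i : ℕ) + 1) := by
          intro hc; exact h (Fin.ext (by omega))
        simp [Matrix.one_apply, h1, h]; omega
    rw [hsub, Matrix.det_one]
    have hentry : abarMat d1 β γ M y (Fin.last d1) 0
        = -β ((d1:ℕ) : ℤ) (M + ((d1:ℕ) : ℤ)) / γ (M - 1) := by
      simp only [abarMat, Matrix.of_apply, Fin.val_zero, if_pos rfl, hlast]
      have h9 : ¬ ((d1 : ℕ) = 0) := by omega
      simp [h9]
    rw [hentry, hlast]
    simp [pow_succ]
    ring
  · intro b _ hb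
    have hb0 : (b : ℕ) ≠ 0 := fun hc => hb (Fin.ext (by simpa using hc))
    have hbd : ¬ ((b : ℕ) = (Fin.last d1 : ℕ) + 1) := by
      have := b.isLt; simp only [Fin.val_last]; omega
    have : abarMat d1 β γ M y (Fin.last d1) b = 0 := by
      simp only [abarMat, Matrix.of_apply, if_neg hb0]
      rw [if_neg hbd]
    rw [this]; ring
  · intro h; exact absurd (Finset.mem_univ _) h

end

noncomputable def ALm (d1 d2 : ℕ) (α : ℤ → ℤ → ℂ) (N : ℤ) (x : ℂ) :
    Matrix (Fin (d1 + 1)) (Fin (d2 + 1)) ℂ :=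
  Matrix.of fun i l =>
    α ((d2 : ℤ) + (i : ℕ) - (l : ℕ)) (N - 1 + (i : ℕ))
      - (if (l : ℕ) = d2 + (i : ℕ) then x else 0)

noncomputable def ARm (d1 d2 : ℕ) (α : ℤ → ℤ → ℂ) (N : ℤ) (x : ℂ) :
    Matrix (Fin (d1 + 1)) (Fin (d1 + 1)) ℂ :=
  Matrix.of fun i l =>
    α (((i : ℕ) : ℤ) - 1 - (l : ℕ)) (N - 1 + (i : ℕ))
      - (if (l : ℕ) + 1 = (i : ℕ) then x else 0)

noncomputable def BLm (d1 d2 : ℕ) (β : ℤ → ℤ → ℂ) (N : ℤ) (y : ℂ) :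
    Matrix (Fin (d2 + 1)) (Fin (d2 + 1)) ℂ :=
  Matrix.of fun i l =>
    β (((l : ℕ) : ℤ) - 1 - (i : ℕ)) (N - (d2 : ℤ) - 1 + (l : ℕ))
      - (if (l : ℕ) = (i : ℕ) + 1 then y else 0)

noncomputable def BRm (d1 d2 : ℕ) (β : ℤ → ℤ → ℂ) (N : ℤ) (y : ℂ) :
    Matrix (Fin (d2 + 1)) (Fin (d1 + 1)) ℂ :=
  Matrix.of fun i l =>
    β ((d2 : ℤ) + (l : ℕ) - (i : ℕ)) (N + (l : ℕ))
      - (if (l : ℕ) + d2 = (i : ℕ) then y else 0)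

section
variable (d1 d2 : ℕ) (α β : ℤ → ℤ → ℂ) (γ : ℤ → ℂ) (N : ℤ) (x y : ℂ)

lemma trim_sum (f : ℕ → ℂ) (n a b c : ℕ) (hn : n = a + b + c)
    (h1 : ∀ r, r < a → f r = 0) (h2 : ∀ r, a + b ≤ r → f r = 0) :
    ∑ r ∈ Finset.range n, f r = ∑ q ∈ Finset.range b, f (a + q) := by
  subst hn
  rw [Finset.sum_range_add, Finset.sum_range_add]
  rw [Finset.sum_eq_zero (fun r hr => h1 r (Finset.mem_range.mp hr)),
    Finset.sum_eq_zero (fun r _ => h2 (a + b + r) (by omega))]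
  ring

lemma rowA (hαsupp : ∀ j n : ℤ, (j < -1 ∨ (d2 : ℤ) < j) → α j n = 0)
    (hαγ : ∀ n : ℤ, α (-1) n = γ n) (hγ : ∀ n : ℤ, γ n ≠ 0) :
    ∀ (i : Fin (d1 + 1)) (c : Fin (d2 + 1)),
    (∑ l : Fin (d2 + 1), ALm d1 d2 α N x i l * Krow d2 α γ N x (l : ℕ) c)
      + (∑ l : Fin (d1 + 1), ARm d1 d2 α N x i l * Krow d2 α γ N x (d2 + 1 + (l : ℕ)) c)
      = 0 := by
  intro i c
  set gA : ℕ → ℂ := fun r =>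
    (α ((d2 : ℤ) + (i : ℕ) - r) (N - 1 + (i : ℕ)) - (if r = d2 + (i : ℕ) then x else 0))
      * Krow d2 α γ N x r c with hgA
  have hsum : (∑ l : Fin (d2 + 1), ALm d1 d2 α N x i l * Krow d2 α γ N x (l : ℕ) c)
      + (∑ l : Fin (d1 + 1), ARm d1 d2 α N x i l * Krow d2 α γ N x (d2 + 1 + (l : ℕ)) c)
      = ∑ r ∈ Finset.range ((d2 + 1) + (d1 + 1)), gA r := by
    rw [Finset.sum_range_add]
    congr 1
    · rw [← Fin.sum_univ_eq_sum_range gA (d2 + 1)]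
      rfl
    · rw [← Fin.sum_univ_eq_sum_range (fun r => gA (d2 + 1 + r)) (d1 + 1)]
      refine Finset.sum_congr rfl (fun l _ => ?_)
      simp only [hgA, ALm, ARm, Matrix.of_apply]
      congr 2
      · congr 1
        push_cast
        ring
      · refine if_congr ?_ rfl rfl
        omega
  rw [hsum]
  have hsplit : ∀ r, gA r = α ((d2 : ℤ) + (i : ℕ) - r) (N - 1 + (i : ℕ)) * Krow d2 α γ N x r c
      - (if r = d2 + (i : ℕ) then x else 0) * Krow d2 α γ N x r c := fun r => by
    rw [hgA]; ring
  simp only [hsplit]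
  rw [Finset.sum_sub_distrib]
  have hx : ∑ r ∈ Finset.range ((d2 + 1) + (d1 + 1)),
      (if r = d2 + (i : ℕ) then x else 0) * Krow d2 α γ N x r c
      = x * Krow d2 α γ N x (d2 + (i : ℕ)) c := by
    simp only [ite_mul, zero_mul]
    rw [Finset.sum_ite_eq' (Finset.range ((d2 + 1) + (d1 + 1))) (d2 + (i : ℕ))
      (fun r => x * Krow d2 α γ N x r c)]
    rw [if_pos (Finset.mem_range.mpr (by omega))]
  rw [hx]
  have htrim : ∑ r ∈ Finset.range ((d2 + 1) + (d1 + 1)),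
      α ((d2 : ℤ) + (i : ℕ) - r) (N - 1 + (i : ℕ)) * Krow d2 α γ N x r c
      = ∑ q ∈ Finset.range (d2 + 2),
          α ((d2 : ℤ) + (i : ℕ) - ((i : ℕ) + q)) (N - 1 + (i : ℕ))
            * Krow d2 α γ N x ((i : ℕ) + q) c := by
    refine trim_sum _ _ (i : ℕ) (d2 + 2) (d1 - (i : ℕ)) (by omega) ?_ ?_
    · intro r hr
      rw [hαsupp _ _ (Or.inr (by omega))]
      ring
    · intro r hr
      rw [hαsupp _ _ (Or.inl (by omega))]
      ring
  rw [htrim]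
  have hconv : ∑ q ∈ Finset.range (d2 + 2),
      α ((d2 : ℤ) + (i : ℕ) - ((i : ℕ) + q)) (N - 1 + (i : ℕ)) * Krow d2 α γ N x ((i : ℕ) + q) c
      = ∑ q ∈ Finset.range (d2 + 2),
      α ((d2 : ℤ) - q) (N - 1 + (i : ℕ)) * Krow d2 α γ N x ((i : ℕ) + q) c := by
    refine Finset.sum_congr rfl (fun q _ => ?_)
    congr 2
    push_cast
    ring
  rw [hconv, Finset.sum_range_succ]
  have hg : α ((d2 : ℤ) - ((d2 + 1 : ℕ) : ℤ)) (N - 1 + (i : ℕ)) = γ (N - 1 + (i : ℕ)) := by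
    rw [show ((d2 : ℤ) - ((d2 + 1 : ℕ) : ℤ)) = -1 by push_cast; ring]
    exact hαγ _
  rw [hg]
  have hEA := EqnA d2 α γ N x hγ (i : ℕ) c
  have hcomm : ∀ q : ℕ, (i : ℕ) + q = q + (i : ℕ) := fun q => Nat.add_comm _ _
  -- massage EqnA : it uses (k + q), here ((i:ℕ) + q)
  have : γ (N - 1 + ((i : ℕ) : ℤ)) * Krow d2 α γ N x ((i : ℕ) + (d2 + 1)) c
      + ∑ q ∈ Finset.range (d2 + 1), α ((d2 : ℤ) - (q : ℤ)) (N - 1 + ((i : ℕ) : ℤ))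
          * Krow d2 α γ N x ((i : ℕ) + q) c
      = x * Krow d2 α γ N x ((i : ℕ) + d2) c := hEA
  rw [show (i : ℕ) + (d2 + 1) = (i : ℕ) + d2 + 1 by omega] at this
  rw [show d2 + (i : ℕ) = (i : ℕ) + d2 by omega]
  rw [show (i : ℕ) + (d2 + 1) = (i : ℕ) + d2 + 1 by omega]
  linear_combination this

lemma rowB (hβsupp : ∀ j n : ℤ, (j < -1 ∨ (d1 : ℤ) < j) → β j n = 0)
    (hβγ : ∀ n : ℤ, β (-1) n = γ n) :
    ∀ (i : Fin (d2 + 1)) (c : Fin (d2 + 1)),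
    (∑ l : Fin (d2 + 1), BLm d1 d2 β N y i l * Krow d2 α γ N x (l : ℕ) c)
      + (∑ l : Fin (d1 + 1), BRm d1 d2 β N y i l * Krow d2 α γ N x (d2 + 1 + (l : ℕ)) c)
      = γ (N - (d2 : ℤ) - 1 + (i : ℕ)) * Krow d2 α γ N x (i : ℕ) c
        + ∑ j ∈ Finset.range (d1 + 1), β (j : ℤ) (N - (d2 : ℤ) + (i : ℕ) + (j : ℤ))
            * Krow d2 α γ N x ((i : ℕ) + 1 + j) c
        - y * Krow d2 α γ N x ((i : ℕ) + 1) c := by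
  intro i c
  set gB : ℕ → ℂ := fun r =>
    (β ((r : ℤ) - 1 - (i : ℕ)) (N - (d2 : ℤ) - 1 + r) - (if r = (i : ℕ) + 1 then y else 0))
      * Krow d2 α γ N x r c with hgB
  have hsum : (∑ l : Fin (d2 + 1), BLm d1 d2 β N y i l * Krow d2 α γ N x (l : ℕ) c)
      + (∑ l : Fin (d1 + 1), BRm d1 d2 β N y i l * Krow d2 α γ N x (d2 + 1 + (l : ℕ)) c)
      = ∑ r ∈ Finset.range ((d2 + 1) + (d1 + 1)), gB r := by
    rw [Finset.sum_range_add]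
    congr 1
    · rw [← Fin.sum_univ_eq_sum_range gB (d2 + 1)]
      rfl
    · rw [← Fin.sum_univ_eq_sum_range (fun r => gB (d2 + 1 + r)) (d1 + 1)]
      refine Finset.sum_congr rfl (fun l _ => ?_)
      simp only [hgB, BLm, BRm, Matrix.of_apply]
      congr 2
      · congr 1
        · push_cast; ring
        · push_cast; ring
      · refine if_congr ?_ rfl rfl
        omega
  rw [hsum]
  have hsplit : ∀ r, gB r = β ((r : ℤ) - 1 - (i : ℕ)) (N - (d2 : ℤ) - 1 + r)
        * Krow d2 α γ N x r c
      - (if r = (i : ℕ) + 1 then y else 0) * Krow d2 α γ N x r c := fun r => by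
    rw [hgB]; ring
  simp only [hsplit]
  rw [Finset.sum_sub_distrib]
  have hy : ∑ r ∈ Finset.range ((d2 + 1) + (d1 + 1)),
      (if r = (i : ℕ) + 1 then y else 0) * Krow d2 α γ N x r c
      = y * Krow d2 α γ N x ((i : ℕ) + 1) c := by
    simp only [ite_mul, zero_mul]
    rw [Finset.sum_ite_eq' (Finset.range ((d2 + 1) + (d1 + 1))) ((i : ℕ) + 1)
      (fun r => y * Krow d2 α γ N x r c)]
    rw [if_pos (Finset.mem_range.mpr (by omega))]
  rw [hy]
  have htrim : ∑ r ∈ Finset.range ((d2 + 1) + (d1 + 1)),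
      β ((r : ℤ) - 1 - (i : ℕ)) (N - (d2 : ℤ) - 1 + r) * Krow d2 α γ N x r c
      = ∑ q ∈ Finset.range (d1 + 2),
          β ((((i : ℕ) + q : ℕ) : ℤ) - 1 - (i : ℕ)) (N - (d2 : ℤ) - 1 + ((i : ℕ) + q : ℕ))
            * Krow d2 α γ N x ((i : ℕ) + q) c := by
    refine trim_sum _ _ (i : ℕ) (d1 + 2) (d2 - (i : ℕ)) (by omega) ?_ ?_
    · intro r hr
      rw [hβsupp _ _ (Or.inl (by omega))]
      ring
    · intro r hr
      rw [hβsupp _ _ (Or.inr (by omega))]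
      ring
  rw [htrim, Finset.sum_range_succ' _ (d1 + 1)]
  have h0 : β ((((i : ℕ) + 0 : ℕ) : ℤ) - 1 - (i : ℕ)) (N - (d2 : ℤ) - 1 + ((i : ℕ) + 0 : ℕ))
        * Krow d2 α γ N x ((i : ℕ) + 0) c
      = γ (N - (d2 : ℤ) - 1 + (i : ℕ)) * Krow d2 α γ N x (i : ℕ) c := by
    rw [show (((i : ℕ) + 0 : ℕ) : ℤ) - 1 - ((i : ℕ) : ℤ) = -1 by push_cast; ring]
    rw [hβγ]
    norm_num
  rw [h0]
  have hconv : ∑ q ∈ Finset.range (d1 + 1),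
      β ((((i : ℕ) + (q + 1) : ℕ) : ℤ) - 1 - (i : ℕ)) (N - (d2 : ℤ) - 1 + ((i : ℕ) + (q + 1) : ℕ))
        * Krow d2 α γ N x ((i : ℕ) + (q + 1)) c
      = ∑ j ∈ Finset.range (d1 + 1), β (j : ℤ) (N - (d2 : ℤ) + (i : ℕ) + (j : ℤ))
            * Krow d2 α γ N x ((i : ℕ) + 1 + j) c := by
    refine Finset.sum_congr rfl (fun q _ => ?_)
    congr 2
    · push_cast; ring
    · push_cast; ring
    · omega
  rw [hconv]
  ring

end

section
variable (d1 d2 : ℕ) (α β : ℤ → ℤ → ℂ) (γ : ℤ → ℂ) (N : ℤ) (x y : ℂ)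

lemma rowBbar (hβsupp : ∀ j n : ℤ, (j < -1 ∨ (d1 : ℤ) < j) → β j n = 0)
    (hβγ : ∀ n : ℤ, β (-1) n = γ n) (hγ : ∀ n : ℤ, γ n ≠ 0) :
    ∀ (i : Fin (d2 + 1)) (l : Fin (d1 + 1)),
    (∑ l' : Fin (d2 + 1), BLm d1 d2 β N y i l' * Kbar d1 β γ N y (d1 + d2 + 1 - (l' : ℕ)) l)
      + (∑ l' : Fin (d1 + 1), BRm d1 d2 β N y i l' * Kbar d1 β γ N y (d1 - (l' : ℕ)) l)
      = 0 := by
  intro i l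
  set gB : ℕ → ℂ := fun r =>
    (β ((r : ℤ) - 1 - (i : ℕ)) (N - (d2 : ℤ) - 1 + r) - (if r = (i : ℕ) + 1 then y else 0))
      * Kbar d1 β γ N y (d1 + d2 + 1 - r) l with hgB
  have hsum : (∑ l' : Fin (d2 + 1), BLm d1 d2 β N y i l' * Kbar d1 β γ N y (d1 + d2 + 1 - (l' : ℕ)) l)
      + (∑ l' : Fin (d1 + 1), BRm d1 d2 β N y i l' * Kbar d1 β γ N y (d1 - (l' : ℕ)) l)
      = ∑ r ∈ Finset.range ((d2 + 1) + (d1 + 1)), gB r := by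
    rw [Finset.sum_range_add]
    congr 1
    · rw [← Fin.sum_univ_eq_sum_range gB (d2 + 1)]
      rfl
    · rw [← Fin.sum_univ_eq_sum_range (fun r => gB (d2 + 1 + r)) (d1 + 1)]
      refine Finset.sum_congr rfl (fun l' _ => ?_)
      simp only [hgB, BLm, BRm, Matrix.of_apply]
      congr 2
      · congr 1
        · push_cast; ring
        · push_cast; ring
      · refine if_congr ?_ rfl rfl
        omega
      · omega
  rw [hsum]
  have hsplit : ∀ r, gB r = β ((r : ℤ) - 1 - (i : ℕ)) (N - (d2 : ℤ) - 1 + r)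
        * Kbar d1 β γ N y (d1 + d2 + 1 - r) l
      - (if r = (i : ℕ) + 1 then y else 0) * Kbar d1 β γ N y (d1 + d2 + 1 - r) l := fun r => by
    rw [hgB]; ring
  simp only [hsplit]
  rw [Finset.sum_sub_distrib]
  have hy : ∑ r ∈ Finset.range ((d2 + 1) + (d1 + 1)),
      (if r = (i : ℕ) + 1 then y else 0) * Kbar d1 β γ N y (d1 + d2 + 1 - r) l
      = y * Kbar d1 β γ N y (d1 + d2 - (i : ℕ)) l := by
    simp only [ite_mul, zero_mul]
    rw [Finset.sum_ite_eq' (Finset.range ((d2 + 1) + (d1 + 1))) ((i : ℕ) + 1)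
      (fun r => y * Kbar d1 β γ N y (d1 + d2 + 1 - r) l)]
    rw [if_pos (Finset.mem_range.mpr (by omega))]
    congr 2
    omega
  rw [hy]
  have htrim : ∑ r ∈ Finset.range ((d2 + 1) + (d1 + 1)),
      β ((r : ℤ) - 1 - (i : ℕ)) (N - (d2 : ℤ) - 1 + r) * Kbar d1 β γ N y (d1 + d2 + 1 - r) l
      = ∑ q ∈ Finset.range (d1 + 2),
          β ((((i : ℕ) + q : ℕ) : ℤ) - 1 - (i : ℕ)) (N - (d2 : ℤ) - 1 + ((i : ℕ) + q : ℕ))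
            * Kbar d1 β γ N y (d1 + d2 + 1 - ((i : ℕ) + q)) l := by
    refine trim_sum _ _ (i : ℕ) (d1 + 2) (d2 - (i : ℕ)) (by omega) ?_ ?_
    · intro r hr
      rw [hβsupp _ _ (Or.inl (by omega))]
      ring
    · intro r hr
      rw [hβsupp _ _ (Or.inr (by omega))]
      ring
  rw [htrim, Finset.sum_range_succ' _ (d1 + 1)]
  set k : ℕ := d2 - (i : ℕ) with hk
  have hik : (i : ℕ) ≤ d2 := Nat.lt_succ_iff.mp i.isLt
  have hkz : ((k : ℕ) : ℤ) = (d2 : ℤ) - (i : ℕ) := by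
    rw [hk]; push_cast [Nat.cast_sub hik]; ring
  have hEB := EqnB d1 β γ N y hγ k l
  have h0 : β ((((i : ℕ) + 0 : ℕ) : ℤ) - 1 - (i : ℕ)) (N - (d2 : ℤ) - 1 + ((i : ℕ) + 0 : ℕ))
        * Kbar d1 β γ N y (d1 + d2 + 1 - ((i : ℕ) + 0)) l
      = γ (N - 1 - (k : ℤ)) * Kbar d1 β γ N y (d1 + 1 + k) l := by
    rw [show (((i : ℕ) + 0 : ℕ) : ℤ) - 1 - ((i : ℕ) : ℤ) = -1 by push_cast; ring]
    rw [hβγ]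
    congr 2
    · omega
    · omega
  rw [h0]
  have hconv : ∑ q ∈ Finset.range (d1 + 1),
      β ((((i : ℕ) + (q + 1) : ℕ) : ℤ) - 1 - (i : ℕ)) (N - (d2 : ℤ) - 1 + ((i : ℕ) + (q + 1) : ℕ))
        * Kbar d1 β γ N y (d1 + d2 + 1 - ((i : ℕ) + (q + 1))) l
      = ∑ j ∈ Finset.range (d1 + 1), β (j : ℤ) (N - (k : ℤ) + (j : ℤ))
            * Kbar d1 β γ N y (k + (d1 - j)) l := by
    refine Finset.sum_congr rfl (fun q hq => ?_)
    have hq' : q ≤ d1 := by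
      have := Finset.mem_range.mp hq; omega
    congr 2
    · push_cast; ring
    · rw [hkz]; push_cast; ring
    · omega
  rw [hconv]
  have hkd : d1 + d2 - (i : ℕ) = k + d1 := by omega
  rw [hkd]
  linear_combination hEB

lemma rowAbar (hαsupp : ∀ j n : ℤ, (j < -1 ∨ (d2 : ℤ) < j) → α j n = 0)
    (hαγ : ∀ n : ℤ, α (-1) n = γ n) :
    ∀ (i : Fin (d1 + 1)) (l : Fin (d1 + 1)),
    (∑ l' : Fin (d2 + 1), ALm d1 d2 α N x i l' * Kbar d1 β γ N y (d1 + d2 + 1 - (l' : ℕ)) l)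
      + (∑ l' : Fin (d1 + 1), ARm d1 d2 α N x i l' * Kbar d1 β γ N y (d1 - (l' : ℕ)) l)
      = γ (N - 1 + (i : ℕ)) * Kbar d1 β γ N y (d1 - (i : ℕ)) l
        + ∑ j ∈ Finset.range (d2 + 1), α (j : ℤ) (N - 1 + (i : ℕ))
            * Kbar d1 β γ N y (j + 1 + (d1 - (i : ℕ))) l
        - x * Kbar d1 β γ N y (1 + (d1 - (i : ℕ))) l := by
  intro i l
  have hid : (i : ℕ) ≤ d1 := Nat.lt_succ_iff.mp i.isLt
  set gA : ℕ → ℂ := fun r =>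
    (α ((d2 : ℤ) + (i : ℕ) - r) (N - 1 + (i : ℕ)) - (if r = d2 + (i : ℕ) then x else 0))
      * Kbar d1 β γ N y (d1 + d2 + 1 - r) l with hgA
  have hsum : (∑ l' : Fin (d2 + 1), ALm d1 d2 α N x i l' * Kbar d1 β γ N y (d1 + d2 + 1 - (l' : ℕ)) l)
      + (∑ l' : Fin (d1 + 1), ARm d1 d2 α N x i l' * Kbar d1 β γ N y (d1 - (l' : ℕ)) l)
      = ∑ r ∈ Finset.range ((d2 + 1) + (d1 + 1)), gA r := by
    rw [Finset.sum_range_add]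
    congr 1
    · rw [← Fin.sum_univ_eq_sum_range gA (d2 + 1)]
      rfl
    · rw [← Fin.sum_univ_eq_sum_range (fun r => gA (d2 + 1 + r)) (d1 + 1)]
      refine Finset.sum_congr rfl (fun l' _ => ?_)
      simp only [hgA, ALm, ARm, Matrix.of_apply]
      congr 2
      · congr 1
        push_cast; ring
      · refine if_congr ?_ rfl rfl
        omega
      · omega
  rw [hsum]
  have hsplit : ∀ r, gA r = α ((d2 : ℤ) + (i : ℕ) - r) (N - 1 + (i : ℕ))
        * Kbar d1 β γ N y (d1 + d2 + 1 - r) l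
      - (if r = d2 + (i : ℕ) then x else 0) * Kbar d1 β γ N y (d1 + d2 + 1 - r) l := fun r => by
    rw [hgA]; ring
  simp only [hsplit]
  rw [Finset.sum_sub_distrib]
  have hx : ∑ r ∈ Finset.range ((d2 + 1) + (d1 + 1)),
      (if r = d2 + (i : ℕ) then x else 0) * Kbar d1 β γ N y (d1 + d2 + 1 - r) l
      = x * Kbar d1 β γ N y (1 + (d1 - (i : ℕ))) l := by
    simp only [ite_mul, zero_mul]
    rw [Finset.sum_ite_eq' (Finset.range ((d2 + 1) + (d1 + 1))) (d2 + (i : ℕ))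
      (fun r => x * Kbar d1 β γ N y (d1 + d2 + 1 - r) l)]
    rw [if_pos (Finset.mem_range.mpr (by omega))]
    congr 2
    omega
  rw [hx]
  have htrim : ∑ r ∈ Finset.range ((d2 + 1) + (d1 + 1)),
      α ((d2 : ℤ) + (i : ℕ) - r) (N - 1 + (i : ℕ)) * Kbar d1 β γ N y (d1 + d2 + 1 - r) l
      = ∑ q ∈ Finset.range (d2 + 2),
          α ((d2 : ℤ) + (i : ℕ) - ((i : ℕ) + q)) (N - 1 + (i : ℕ))
            * Kbar d1 β γ N y (d1 + d2 + 1 - ((i : ℕ) + q)) l := by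
    refine trim_sum _ _ (i : ℕ) (d2 + 2) (d1 - (i : ℕ)) (by omega) ?_ ?_
    · intro r hr
      rw [hαsupp _ _ (Or.inr (by omega))]
      ring
    · intro r hr
      rw [hαsupp _ _ (Or.inl (by omega))]
      ring
  rw [htrim, Finset.sum_range_succ]
  have h0 : α ((d2 : ℤ) + (i : ℕ) - (((i : ℕ) : ℤ) + ((d2 + 1 : ℕ) : ℤ))) (N - 1 + (i : ℕ))
        * Kbar d1 β γ N y (d1 + d2 + 1 - ((i : ℕ) + (d2 + 1))) l
      = γ (N - 1 + (i : ℕ)) * Kbar d1 β γ N y (d1 - (i : ℕ)) l := by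
    rw [show (d2 : ℤ) + (i : ℕ) - (((i : ℕ) : ℤ) + ((d2 + 1 : ℕ) : ℤ)) = -1 by push_cast; ring]
    rw [hαγ]
    congr 2
    omega
  rw [h0]
  have hconv : ∑ q ∈ Finset.range (d2 + 1),
      α ((d2 : ℤ) + (i : ℕ) - ((i : ℕ) + q)) (N - 1 + (i : ℕ))
        * Kbar d1 β γ N y (d1 + d2 + 1 - ((i : ℕ) + q)) l
      = ∑ q ∈ Finset.range (d2 + 1),
        (fun (j : ℕ) => α ((j : ℕ) : ℤ) (N - 1 + (i : ℕ)) * Kbar d1 β γ N y (j + 1 + (d1 - (i : ℕ))) l)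
          (d2 + 1 - 1 - q) := by
    refine Finset.sum_congr rfl (fun q hq => ?_)
    have hq' : q ≤ d2 := by
      have := Finset.mem_range.mp hq; omega
    simp only []
    congr 2
    · push_cast [Nat.cast_sub hq']; omega
    · omega
  rw [hconv]
  rw [Finset.sum_range_reflect
    (fun (j : ℕ) => α ((j : ℕ) : ℤ) (N - 1 + (i : ℕ)) * Kbar d1 β γ N y (j + 1 + (d1 - (i : ℕ))) l)
    (d2 + 1)]
  ring

end
noncomputable def Pmat (d1 d2 : ℕ) (α β : ℤ → ℤ → ℂ) (γ : ℤ → ℂ) (N : ℤ) (x y : ℂ) :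
    Matrix (Fin (d2 + 1)) (Fin (d2 + 1)) ℂ :=
  Matrix.of fun i c =>
    γ (N - (d2 : ℤ) - 1 + (i : ℕ)) * Krow d2 α γ N x (i : ℕ) c
      + ∑ j ∈ Finset.range (d1 + 1), β (j : ℤ) (N - (d2 : ℤ) + (i : ℕ) + (j : ℤ))
          * Krow d2 α γ N x ((i : ℕ) + 1 + j) c
      - y * Krow d2 α γ N x ((i : ℕ) + 1) c

noncomputable def Qmat (d1 d2 : ℕ) (α β : ℤ → ℤ → ℂ) (γ : ℤ → ℂ) (N : ℤ) (x y : ℂ) :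
    Matrix (Fin (d1 + 1)) (Fin (d1 + 1)) ℂ :=
  Matrix.of fun l i =>
    γ (N - 1 + (i : ℕ)) * Kbar d1 β γ N y (d1 - (i : ℕ)) l
      + ∑ j ∈ Finset.range (d2 + 1), α (j : ℤ) (N - 1 + (i : ℕ))
          * Kbar d1 β γ N y (j + 1 + (d1 - (i : ℕ))) l
      - x * Kbar d1 β γ N y (1 + (d1 - (i : ℕ))) l

section
variable (d1 d2 : ℕ) (α β : ℤ → ℤ → ℂ) (γ : ℤ → ℂ) (N : ℤ) (x y : ℂ)

lemma Krow_id (l c : Fin (d2 + 1)) :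
    Krow d2 α γ N x (l : ℕ) c = (1 : Matrix (Fin (d2 + 1)) (Fin (d2 + 1)) ℂ) l c := by
  have hl : (l : ℕ) ≤ d2 := Nat.lt_succ_iff.mp l.isLt
  rw [Krow, if_pos hl, Matrix.one_apply]
  by_cases h : l = c
  · simp [h]
  · have : ¬ ((c : ℕ) = (l : ℕ)) := fun hc => h (Fin.ext hc.symm)
    simp [h, this]

lemma Kbar_id (l' l : Fin (d1 + 1)) :
    Kbar d1 β γ N y (d1 - (l' : ℕ)) l = (1 : Matrix (Fin (d1 + 1)) (Fin (d1 + 1)) ℂ) l' l := by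
  have hl : (l' : ℕ) ≤ d1 := Nat.lt_succ_iff.mp l'.isLt
  rw [Kbar, if_pos (Nat.sub_le _ _), Matrix.one_apply]
  have hsub : d1 - (d1 - (l' : ℕ)) = (l' : ℕ) := by omega
  rw [hsub]
  by_cases h : l' = l
  · simp [h]
  · have : ¬ ((l : ℕ) = (l' : ℕ)) := fun hc => h (Fin.ext hc.symm)
    simp [h, this]

/-- D1-side matrix identity: `(D1 - y) * a(N-1) = Pmat`. -/
lemma hPD1 (hαtopne : α (d2 : ℤ) (N - 1) ≠ 0) (hd2 : 1 ≤ d2) (hγ : ∀ n : ℤ, γ n ≠ 0) :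
    (D1Mat d1 d2 α β γ N x - y • (1 : Matrix (Fin (d2+1)) (Fin (d2+1)) ℂ))
      * aMat d2 α γ (N - 1) x = Pmat d1 d2 α β γ N x y := by
  have hdet : IsUnit (aMat d2 α γ (N - 1) x).det := by
    rw [det_aMat d2 α γ (N-1) x hd2]
    exact (mul_ne_zero (mul_ne_zero (pow_ne_zero _ (by norm_num)) hαtopne)
      (inv_ne_zero (hγ (N-1)))).isUnit
  have hinv : (aMat d2 α γ (N - 1) x)⁻¹ * aMat d2 α γ (N - 1) x = 1 :=
    Matrix.nonsing_inv_mul _ hdet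
  have haP1 : aProd d2 α γ (N - 1) x 1 = aMat d2 α γ (N - 1) x := by
    show aMat d2 α γ (N - 1 + ((0:ℕ) : ℤ)) x * 1 = aMat d2 α γ (N - 1) x
    norm_num
  have haPm : ∀ j : ℕ, aProd d2 α γ N x j * aMat d2 α γ (N - 1) x
      = aProd d2 α γ (N - 1) x (j + 1) := by
    intro j
    have := aProd_mul_aMat d2 α γ (N - 1) x j
    rwa [show N - 1 + 1 = N by ring] at this
  have hΓ : Matrix.diagonal (fun i : Fin (d2+1) => γ (N - (d2 : ℤ) - 1 + ((i : ℕ) : ℤ)))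
      = Matrix.of (fun (i c : Fin (d2+1)) => γ (N - (d2 : ℤ) - 1 + ((i : ℕ) : ℤ)) * Krow d2 α γ N x (i : ℕ) c) := by
    ext i c
    rw [Matrix.of_apply, Krow_id, Matrix.diagonal_apply, Matrix.one_apply]
    by_cases h : i = c <;> simp [h]
  have hB0 : Matrix.diagonal (fun i : Fin (d2+1) => β 0 (N - (d2 : ℤ) + ((i : ℕ) : ℤ)))
        * aProd d2 α γ (N - 1) x 1
      = Matrix.of (fun (i c : Fin (d2+1)) => β 0 (N - (d2 : ℤ) + ((i : ℕ) : ℤ))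
          * Krow d2 α γ N x ((i : ℕ) + 1 + 0) c) := by
    ext i c
    rw [Matrix.diagonal_mul, Matrix.of_apply, Krow_spec]
    congr 2
    omega
  have hyy : y • aProd d2 α γ (N - 1) x 1
      = Matrix.of (fun (i c : Fin (d2+1)) => y * Krow d2 α γ N x ((i : ℕ) + 1) c) := by
    ext i c
    rw [Matrix.smul_apply, Matrix.of_apply, Krow_spec, smul_eq_mul]
    congr 2
    omega
  have hsumM : ∑ j ∈ Finset.Icc 1 d1,
        Matrix.diagonal (fun i : Fin (d2+1) => β (j : ℤ) (N + (j : ℤ) - (d2 : ℤ) + ((i : ℕ) : ℤ)))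
          * aProd d2 α γ (N - 1) x (j + 1)
      = ∑ j ∈ Finset.Icc 1 d1, Matrix.of (fun (i c : Fin (d2+1)) => β (j : ℤ) (N + (j : ℤ) - (d2 : ℤ) + ((i : ℕ) : ℤ))
          * Krow d2 α γ N x ((i : ℕ) + 1 + j) c) := by
    refine Finset.sum_congr rfl (fun j _ => ?_)
    ext i c
    rw [Matrix.diagonal_mul, Matrix.of_apply, Krow_spec]
    congr 2
    omega
  have hLHS : (D1Mat d1 d2 α β γ N x - y • (1 : Matrix (Fin (d2+1)) (Fin (d2+1)) ℂ))
      * aMat d2 α γ (N - 1) x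
      = Matrix.of (fun (i c : Fin (d2+1)) => γ (N - (d2 : ℤ) - 1 + ((i : ℕ) : ℤ)) * Krow d2 α γ N x (i : ℕ) c)
        + Matrix.of (fun (i c : Fin (d2+1)) => β 0 (N - (d2 : ℤ) + ((i : ℕ) : ℤ)) * Krow d2 α γ N x ((i : ℕ) + 1 + 0) c)
        + ∑ j ∈ Finset.Icc 1 d1, Matrix.of (fun (i c : Fin (d2+1)) => β (j : ℤ) (N + (j : ℤ) - (d2 : ℤ) + ((i : ℕ) : ℤ))
            * Krow d2 α γ N x ((i : ℕ) + 1 + j) c)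
        - Matrix.of (fun (i c : Fin (d2+1)) => y * Krow d2 α γ N x ((i : ℕ) + 1) c) := by
    rw [D1Mat, sub_mul, add_mul, add_mul, Finset.sum_mul]
    rw [mul_assoc _ _ (aMat d2 α γ (N-1) x), hinv, mul_one]
    rw [smul_mul_assoc, one_mul]
    rw [← haP1, hΓ, hB0, hyy, ← hsumM]
    congr 2
    refine Finset.sum_congr rfl (fun j _ => ?_)
    rw [mul_assoc, haP1, haPm j]
  rw [hLHS]
  ext i c
  simp only [Matrix.sub_apply, Matrix.add_apply, Matrix.sum_apply, Matrix.of_apply, Pmat]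
  have hsum : ∑ j ∈ Finset.range (d1 + 1), β (j : ℤ) (N - (d2 : ℤ) + (i : ℕ) + (j : ℤ))
          * Krow d2 α γ N x ((i : ℕ) + 1 + j) c
      = β 0 (N - (d2 : ℤ) + (i : ℕ)) * Krow d2 α γ N x ((i : ℕ) + 1 + 0) c
        + ∑ j ∈ Finset.Icc 1 d1, β (j : ℤ) (N + (j : ℤ) - (d2 : ℤ) + (i : ℕ))
            * Krow d2 α γ N x ((i : ℕ) + 1 + j) c := by
    rw [Finset.sum_range_succ']
    have hIcc : ∑ j ∈ Finset.Icc 1 d1, β (j : ℤ) (N + (j : ℤ) - (d2 : ℤ) + (i : ℕ))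
            * Krow d2 α γ N x ((i : ℕ) + 1 + j) c
        = ∑ j ∈ Finset.range d1, β ((j + 1 : ℕ) : ℤ) (N - (d2 : ℤ) + (i : ℕ) + ((j + 1 : ℕ) : ℤ))
            * Krow d2 α γ N x ((i : ℕ) + 1 + (j + 1)) c := by
      rw [← Finset.Ico_add_one_right_eq_Icc, Finset.sum_Ico_eq_sum_range]
      refine Finset.sum_congr (by congr 1) (fun j _ => ?_)
      congr 2
      · push_cast; ring_nf
      · push_cast; ring
      · omega
    rw [hIcc]
    push_cast
    simp only [add_zero]
    ring
  rw [hsum]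
  ring


section
variable (d1 d2 : ℕ) (α β : ℤ → ℤ → ℂ) (γ : ℤ → ℂ) (N : ℤ) (x y : ℂ)

/-- D2-side matrix identity: `abar(N) * (D2bar - x) = Qmat`. -/
lemma hQD2 (hβtopne : β (d1 : ℤ) (N + (d1 : ℤ)) ≠ 0) (hd1 : 1 ≤ d1) (hγ : ∀ n : ℤ, γ n ≠ 0) :
    abarMat d1 β γ N y
      * (D2barMat d1 d2 α β γ N y - x • (1 : Matrix (Fin (d1+1)) (Fin (d1+1)) ℂ))
      = Qmat d1 d2 α β γ N x y := by
  have hdet : IsUnit (abarMat d1 β γ N y).det := by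
    rw [det_abarMat d1 β γ N y hd1]
    exact (mul_ne_zero (mul_ne_zero (pow_ne_zero _ (by norm_num)) hβtopne)
      (inv_ne_zero (hγ (N-1)))).isUnit
  have hinv : abarMat d1 β γ N y * (abarMat d1 β γ N y)⁻¹ = 1 :=
    Matrix.mul_nonsing_inv _ hdet
  have habP1 : abarProd d1 β γ (N + 1) y 1 = abarMat d1 β γ N y := by
    show abarProd d1 β γ (N+1) y 0 * abarMat d1 β γ (N + 1 - 1 - ((0:ℕ) : ℤ)) y
        = abarMat d1 β γ N y
    rw [show N + 1 - 1 - ((0:ℕ) : ℤ) = N by push_cast; ring]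
    show (1 : Matrix _ _ ℂ) * _ = _
    rw [one_mul]
  have habPm : ∀ j : ℕ, abarMat d1 β γ N y * abarProd d1 β γ N y j
      = abarProd d1 β γ (N + 1) y (j + 1) := abarMat_mul_abarProd d1 β γ N y
  have hΓ' : Matrix.diagonal (fun i : Fin (d1+1) => γ (N - 1 + ((i : ℕ) : ℤ)))
      = Matrix.of (fun (l i : Fin (d1+1)) => γ (N - 1 + ((i : ℕ) : ℤ))
          * Kbar d1 β γ N y (d1 - (i : ℕ)) l) := by
    ext l i
    rw [Matrix.of_apply, Kbar_id, Matrix.diagonal_apply, Matrix.one_apply]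
    by_cases h : l = i
    · simp [h]
    · have h' : ¬ (i = l) := fun hc => h hc.symm
      simp [h, h']
  have hA0 : abarMat d1 β γ N y
        * Matrix.diagonal (fun i : Fin (d1+1) => α 0 (N - 1 + ((i : ℕ) : ℤ)))
      = Matrix.of (fun (l i : Fin (d1+1)) => α ((0 : ℕ) : ℤ) (N - 1 + ((i : ℕ) : ℤ))
          * Kbar d1 β γ N y (0 + 1 + (d1 - (i : ℕ))) l) := by
    rw [← habP1]
    ext l i
    rw [Matrix.mul_diagonal, Matrix.of_apply, Kbar_spec]
    push_cast
    rw [mul_comm]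
  have hxx : abarMat d1 β γ N y * (x • (1 : Matrix (Fin (d1+1)) (Fin (d1+1)) ℂ))
      = Matrix.of (fun (l i : Fin (d1+1)) => x * Kbar d1 β γ N y (1 + (d1 - (i : ℕ))) l) := by
    rw [mul_smul_comm, mul_one, ← habP1]
    ext l i
    rw [Matrix.smul_apply, Kbar_spec, smul_eq_mul, Matrix.of_apply]
  have hsumM : ∀ j ∈ Finset.Icc 1 d2, abarMat d1 β γ N y
        * (abarProd d1 β γ N y j
            * Matrix.diagonal (fun i : Fin (d1+1) => α (j : ℤ) (N - 1 + ((i : ℕ) : ℤ))))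
      = Matrix.of (fun (l i : Fin (d1+1)) => α (j : ℤ) (N - 1 + ((i : ℕ) : ℤ))
          * Kbar d1 β γ N y (j + 1 + (d1 - (i : ℕ))) l) := by
    intro j _
    rw [← mul_assoc, habPm j]
    ext l i
    rw [Matrix.mul_diagonal, Matrix.of_apply, Kbar_spec]
    rw [mul_comm]
  have hLHS : abarMat d1 β γ N y
      * (D2barMat d1 d2 α β γ N y - x • (1 : Matrix (Fin (d1+1)) (Fin (d1+1)) ℂ))
      = Matrix.of (fun (l i : Fin (d1+1)) => γ (N - 1 + ((i : ℕ) : ℤ))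
            * Kbar d1 β γ N y (d1 - (i : ℕ)) l)
        + Matrix.of (fun (l i : Fin (d1+1)) => α ((0 : ℕ) : ℤ) (N - 1 + ((i : ℕ) : ℤ))
            * Kbar d1 β γ N y (0 + 1 + (d1 - (i : ℕ))) l)
        + ∑ j ∈ Finset.Icc 1 d2, Matrix.of (fun (l i : Fin (d1+1)) => α (j : ℤ) (N - 1 + ((i : ℕ) : ℤ))
            * Kbar d1 β γ N y (j + 1 + (d1 - (i : ℕ))) l)
        - Matrix.of (fun (l i : Fin (d1+1)) => x * Kbar d1 β γ N y (1 + (d1 - (i : ℕ))) l) := by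
    rw [D2barMat, mul_sub, mul_add, mul_add, Finset.mul_sum]
    rw [← mul_assoc, hinv, one_mul]
    rw [hΓ', hA0, hxx]
    congr 2
    exact Finset.sum_congr rfl hsumM
  rw [hLHS]
  ext l i
  simp only [Matrix.sub_apply, Matrix.add_apply, Matrix.sum_apply, Matrix.of_apply, Qmat]
  have hsum : ∑ j ∈ Finset.range (d2 + 1), α (j : ℤ) (N - 1 + ((i : ℕ) : ℤ))
          * Kbar d1 β γ N y (j + 1 + (d1 - (i : ℕ))) l
      = α ((0 : ℕ) : ℤ) (N - 1 + ((i : ℕ) : ℤ)) * Kbar d1 β γ N y (0 + 1 + (d1 - (i : ℕ))) l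
        + ∑ j ∈ Finset.Icc 1 d2, α (j : ℤ) (N - 1 + ((i : ℕ) : ℤ))
            * Kbar d1 β γ N y (j + 1 + (d1 - (i : ℕ))) l := by
    rw [Finset.sum_range_succ']
    have hIcc : ∑ j ∈ Finset.Icc 1 d2, α (j : ℤ) (N - 1 + ((i : ℕ) : ℤ))
            * Kbar d1 β γ N y (j + 1 + (d1 - (i : ℕ))) l
        = ∑ j ∈ Finset.range d2, α ((j + 1 : ℕ) : ℤ) (N - 1 + ((i : ℕ) : ℤ))
            * Kbar d1 β γ N y ((j + 1) + 1 + (d1 - (i : ℕ))) l := by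
      rw [← Finset.Ico_add_one_right_eq_Icc, Finset.sum_Ico_eq_sum_range]
      refine Finset.sum_congr (by congr 1) (fun j _ => ?_)
      congr 2
      · push_cast; ring
      · omega
    rw [hIcc]
    simp only [add_zero, zero_add]
    ring
  rw [hsum]
  ring

end

section
variable (d1 d2 : ℕ) (α β : ℤ → ℤ → ℂ) (γ : ℤ → ℂ) (N : ℤ) (x y : ℂ)

lemma detARm (hαsupp : ∀ j n : ℤ, (j < -1 ∨ (d2 : ℤ) < j) → α j n = 0)
    (hαγ : ∀ n : ℤ, α (-1) n = γ n) :
    (ARm d1 d2 α N x).det = ∏ i : Fin (d1 + 1), γ (N - 1 + ((i : ℕ) : ℤ)) := by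
  have htri : (ARm d1 d2 α N x).BlockTriangular (OrderDual.toDual) := by
    intro i j hij
    have hij' : i < j := hij
    have hij'' : (i : ℕ) < (j : ℕ) := hij'
    simp only [ARm, Matrix.of_apply]
    rw [hαsupp _ _ (Or.inl (by omega)), if_neg (by omega)]
    ring
  rw [Matrix.det_of_lowerTriangular _ htri]
  refine Finset.prod_congr rfl (fun i _ => ?_)
  simp only [ARm, Matrix.of_apply]
  rw [if_neg (by omega), show ((i : ℕ) : ℤ) - 1 - ((i : ℕ) : ℤ) = -1 by ring, hαγ]
  ring

lemma detBLm (hβsupp : ∀ j n : ℤ, (j < -1 ∨ (d1 : ℤ) < j) → β j n = 0)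
    (hβγ : ∀ n : ℤ, β (-1) n = γ n) :
    (BLm d1 d2 β N y).det = ∏ i : Fin (d2 + 1), γ (N - (d2 : ℤ) - 1 + ((i : ℕ) : ℤ)) := by
  have htri : (BLm d1 d2 β N y).BlockTriangular id := by
    intro i j hij
    have hij'' : (j : ℕ) < (i : ℕ) := hij
    simp only [BLm, Matrix.of_apply]
    rw [hβsupp _ _ (Or.inl (by omega)), if_neg (by omega)]
    ring
  rw [Matrix.det_of_upperTriangular htri]
  refine Finset.prod_congr rfl (fun i _ => ?_)
  simp only [BLm, Matrix.of_apply]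
  rw [if_neg (by omega), show ((i : ℕ) : ℤ) - 1 - ((i : ℕ) : ℤ) = -1 by ring, hβγ]
  ring

end

theorem spectral_duality_aux (d1 d2 : ℕ) (hd1 : 1 ≤ d1) (hd2 : 1 ≤ d2)
    (α β : ℤ → ℤ → ℂ) (γ : ℤ → ℂ)
    (hαsupp : ∀ j n : ℤ, (j < -1 ∨ (d2 : ℤ) < j) → α j n = 0)
    (hβsupp : ∀ j n : ℤ, (j < -1 ∨ (d1 : ℤ) < j) → β j n = 0)
    (hαγ : ∀ n : ℤ, α (-1) n = γ n)
    (hβγ : ∀ n : ℤ, β (-1) n = γ n)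
    (hγ : ∀ n : ℤ, γ n ≠ 0)
    (u v : ℂ) (hu : u ≠ 0) (hv : v ≠ 0)
    (hαtop : ∀ n : ℤ, α (d2 : ℤ) n = v * ∏ j ∈ Finset.Icc 1 d2, γ (n - (j : ℤ)))
    (hβtop : ∀ n : ℤ, β (d1 : ℤ) n = u * ∏ j ∈ Finset.Icc 1 d1, γ (n - (j : ℤ)))
    (N : ℤ) (x y : ℂ) :
    u * (x • (1 : Matrix (Fin (d1 + 1)) (Fin (d1 + 1)) ℂ)
          - D2barMat d1 d2 α β γ N y).det =
      v * (y • (1 : Matrix (Fin (d2 + 1)) (Fin (d2 + 1)) ℂ)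
          - D1Mat d1 d2 α β γ N x).det := by
  classical
  set g : ℂ := γ (N - 1) with hgdef
  set Pg : ℂ := ∏ j ∈ Finset.Icc 1 d2, γ ((N - 1) - (j : ℤ)) with hPgdef
  set G2 : ℂ := ∏ i ∈ Finset.range d1, γ (N + (i : ℤ)) with hG2def
  have hgne : g ≠ 0 := hγ _
  have hPgne : Pg ≠ 0 := Finset.prod_ne_zero_iff.mpr (fun j _ => hγ _)
  have hG2ne : G2 ≠ 0 := Finset.prod_ne_zero_iff.mpr (fun j _ => hγ _)
  have hαne : α (d2 : ℤ) (N - 1) ≠ 0 := by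
    rw [hαtop]; exact mul_ne_zero hv hPgne
  have hβtopG : β (d1 : ℤ) (N + (d1 : ℤ)) = u * G2 := by
    rw [hβtop, hG2def]
    congr 1
    rw [← Finset.Ico_add_one_right_eq_Icc, Finset.prod_Ico_eq_prod_range]
    rw [← Finset.prod_range_reflect (fun i => γ (N + (i : ℤ))) d1]
    refine Finset.prod_congr (by congr 1) (fun i hi => ?_)
    have hi' : i < d1 := Finset.mem_range.mp hi
    congr 1
    push_cast [Nat.cast_sub (by omega : i ≤ d1 - 1)]
    omega
  have hβne : β (d1 : ℤ) (N + (d1 : ℤ)) ≠ 0 := by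
    rw [hβtopG]; exact mul_ne_zero hu hG2ne
  -- blocks
  set AL := ALm d1 d2 α N x with hAL
  set AR := ARm d1 d2 α N x with hAR
  set BL := BLm d1 d2 β N y with hBL
  set BR := BRm d1 d2 β N y with hBR
  set Kb : Matrix (Fin (d1 + 1)) (Fin (d2 + 1)) ℂ :=
    Matrix.of (fun (l : Fin (d1+1)) (c : Fin (d2+1)) => Krow d2 α γ N x (d2 + 1 + (l : ℕ)) c)
    with hKb
  set Kt : Matrix (Fin (d2 + 1)) (Fin (d1 + 1)) ℂ :=
    Matrix.of (fun (l' : Fin (d2+1)) (l : Fin (d1+1)) =>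
      Kbar d1 β γ N y (d1 + d2 + 1 - (l' : ℕ)) l) with hKt
  -- determinants of corner blocks
  have hARdet : AR.det = ∏ i : Fin (d1 + 1), γ (N - 1 + ((i : ℕ) : ℤ)) :=
    detARm d1 d2 α γ N x hαsupp hαγ
  have hBLdet : BL.det = ∏ i : Fin (d2 + 1), γ (N - (d2 : ℤ) - 1 + ((i : ℕ) : ℤ)) :=
    detBLm d1 d2 β γ N y hβsupp hβγ
  have hARne : AR.det ≠ 0 := by
    rw [hARdet]; exact Finset.prod_ne_zero_iff.mpr (fun j _ => hγ _)
  have hBLne : BL.det ≠ 0 := by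
    rw [hBLdet]; exact Finset.prod_ne_zero_iff.mpr (fun j _ => hγ _)
  haveI iAR : Invertible AR := AR.invertibleOfIsUnitDet hARne.isUnit
  haveI iBL : Invertible BL := BL.invertibleOfIsUnitDet hBLne.isUnit
  -- kernel identities
  have hAK : AL + AR * Kb = 0 := by
    ext i c
    have h0 := rowA d1 d2 α γ N x hαsupp hαγ hγ i c
    have h1 : ∑ l : Fin (d2 + 1), ALm d1 d2 α N x i l * Krow d2 α γ N x (l : ℕ) c
        = AL i c := by
      have : ∀ l : Fin (d2+1), ALm d1 d2 α N x i l * Krow d2 α γ N x (l : ℕ) c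
          = ALm d1 d2 α N x i l * (1 : Matrix (Fin (d2+1)) (Fin (d2+1)) ℂ) l c := by
        intro l; rw [Krow_id]
      simp only [this]
      rw [← Matrix.mul_apply, Matrix.mul_one, hAL]
    simp only [Matrix.add_apply, Matrix.mul_apply, Matrix.zero_apply, hKb, Matrix.of_apply]
    rw [← h1]
    exact h0
  have hBK : BL + BR * Kb = Pmat d1 d2 α β γ N x y := by
    ext i c
    have h0 := rowB d1 d2 α β γ N x y hβsupp hβγ i c
    have h1 : ∑ l : Fin (d2 + 1), BLm d1 d2 β N y i l * Krow d2 α γ N x (l : ℕ) c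
        = BL i c := by
      have : ∀ l : Fin (d2+1), BLm d1 d2 β N y i l * Krow d2 α γ N x (l : ℕ) c
          = BLm d1 d2 β N y i l * (1 : Matrix (Fin (d2+1)) (Fin (d2+1)) ℂ) l c := by
        intro l; rw [Krow_id]
      simp only [this]
      rw [← Matrix.mul_apply, Matrix.mul_one, hBL]
    simp only [Matrix.add_apply, Matrix.mul_apply, hKb, Matrix.of_apply, Pmat]
    rw [← h1]
    exact h0
  have hBKbar : BR + BL * Kt = 0 := by
    ext i l
    have h0 := rowBbar d1 d2 β γ N y hβsupp hβγ hγ i l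
    have h1 : ∑ l' : Fin (d1 + 1), BRm d1 d2 β N y i l' * Kbar d1 β γ N y (d1 - (l' : ℕ)) l
        = BR i l := by
      have : ∀ l' : Fin (d1+1), BRm d1 d2 β N y i l' * Kbar d1 β γ N y (d1 - (l' : ℕ)) l
          = BRm d1 d2 β N y i l' * (1 : Matrix (Fin (d1+1)) (Fin (d1+1)) ℂ) l' l := by
        intro l'; rw [Kbar_id]
      simp only [this]
      rw [← Matrix.mul_apply, Matrix.mul_one, hBR]
    simp only [Matrix.add_apply, Matrix.mul_apply, Matrix.zero_apply, hKt, Matrix.of_apply]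
    rw [← h1]
    rw [add_comm]
    exact h0
  have hAKbar : AR + AL * Kt = (Qmat d1 d2 α β γ N x y)ᵀ := by
    ext i l
    have h0 := rowAbar d1 d2 α β γ N x y hαsupp hαγ i l
    have h1 : ∑ l' : Fin (d1 + 1), ARm d1 d2 α N x i l' * Kbar d1 β γ N y (d1 - (l' : ℕ)) l
        = AR i l := by
      have : ∀ l' : Fin (d1+1), ARm d1 d2 α N x i l' * Kbar d1 β γ N y (d1 - (l' : ℕ)) l
          = ARm d1 d2 α N x i l' * (1 : Matrix (Fin (d1+1)) (Fin (d1+1)) ℂ) l' l := by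
        intro l'; rw [Kbar_id]
      simp only [this]
      rw [← Matrix.mul_apply, Matrix.mul_one, hAR]
    simp only [Matrix.add_apply, Matrix.mul_apply, hKt, Matrix.of_apply,
      Matrix.transpose_apply, Qmat]
    rw [← h1]
    rw [add_comm]
    exact h0
  -- Schur complements
  have hS1 : BL - BR * AR⁻¹ * AL = Pmat d1 d2 α β γ N x y := by
    have hALeq : AL = -(AR * Kb) := by
      rw [eq_neg_iff_add_eq_zero]; exact hAK
    rw [hALeq]
    rw [← hBK]
    rw [Matrix.mul_neg, sub_neg_eq_add, Matrix.mul_assoc BR AR⁻¹ (AR * Kb),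
      ← Matrix.mul_assoc AR⁻¹ AR Kb, Matrix.nonsing_inv_mul _ hARne.isUnit, Matrix.one_mul]
  have hS2 : AR - AL * BL⁻¹ * BR = (Qmat d1 d2 α β γ N x y)ᵀ := by
    have hBReq : BR = -(BL * Kt) := by
      rw [eq_neg_iff_add_eq_zero]; exact hBKbar
    rw [hBReq]
    rw [← hAKbar]
    rw [Matrix.mul_neg, sub_neg_eq_add, Matrix.mul_assoc AL BL⁻¹ (BL * Kt),
      ← Matrix.mul_assoc BL⁻¹ BL Kt, Matrix.nonsing_inv_mul _ hBLne.isUnit, Matrix.one_mul]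
  -- two evaluations of the big determinant
  have hW1 : (Matrix.fromBlocks BL BR AL AR).det
      = BL.det * (AR - AL * BL⁻¹ * BR).det := by
    rw [Matrix.det_fromBlocks₁₁, Matrix.invOf_eq_nonsing_inv]
  have hW2 : (Matrix.fromBlocks BL BR AL AR).det
      = AR.det * (BL - BR * AR⁻¹ * AL).det := by
    rw [Matrix.det_fromBlocks₂₂, Matrix.invOf_eq_nonsing_inv]
  have hdetEq : BL.det * ((abarMat d1 β γ N y).det
        * (D2barMat d1 d2 α β γ N y - x • (1 : Matrix (Fin (d1+1)) (Fin (d1+1)) ℂ)).det)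
      = AR.det * ((D1Mat d1 d2 α β γ N x
            - y • (1 : Matrix (Fin (d2+1)) (Fin (d2+1)) ℂ)).det
          * (aMat d2 α γ (N - 1) x).det) := by
    have e1 : (abarMat d1 β γ N y).det
        * (D2barMat d1 d2 α β γ N y - x • (1 : Matrix (Fin (d1+1)) (Fin (d1+1)) ℂ)).det
        = (Qmat d1 d2 α β γ N x y).det := by
      rw [← Matrix.det_mul, hQD2 d1 d2 α β γ N x y hβne hd1 hγ]
    have e2 : (D1Mat d1 d2 α β γ N x - y • (1 : Matrix (Fin (d2+1)) (Fin (d2+1)) ℂ)).det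
        * (aMat d2 α γ (N - 1) x).det
        = (Pmat d1 d2 α β γ N x y).det := by
      rw [← Matrix.det_mul, hPD1 d1 d2 α β γ N x y hαne hd2 hγ]
    rw [e1, e2]
    have e3 : (Qmat d1 d2 α β γ N x y).det = ((Qmat d1 d2 α β γ N x y)ᵀ).det :=
      (Matrix.det_transpose _).symm
    rw [e3, ← hS2, ← hW1, hW2, hS1]
  -- product identities
  have hGb : BL.det = Pg * g := by
    rw [hBLdet]
    rw [Fin.prod_univ_eq_prod_range (fun i => γ (N - (d2 : ℤ) - 1 + (i : ℤ))) (d2+1)]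
    rw [Finset.prod_range_succ]
    congr 1
    · rw [hPgdef, ← Finset.Ico_add_one_right_eq_Icc, Finset.prod_Ico_eq_prod_range]
      rw [← Finset.prod_range_reflect (fun i => γ (N - (d2 : ℤ) - 1 + (i : ℤ))) d2]
      refine Finset.prod_congr (by congr 1) (fun i hi => ?_)
      have hi' : i < d2 := Finset.mem_range.mp hi
      congr 1
      push_cast [Nat.cast_sub (by omega : i ≤ d2 - 1)]
      omega
    · rw [hgdef]; congr 1; push_cast; ring
  have hGa : AR.det = g * G2 := by
    rw [hARdet]
    rw [Fin.prod_univ_eq_prod_range (fun i => γ (N - 1 + (i : ℤ))) (d1+1)]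
    rw [Finset.prod_range_succ']
    rw [mul_comm]
    congr 1
    · rw [hgdef]; congr 1; push_cast; ring
    · rw [hG2def]
      refine Finset.prod_congr rfl (fun i _ => ?_)
      congr 1
      push_cast
      ring
  -- cleared determinant formulas
  have h1 : g * (aMat d2 α γ (N - 1) x).det = (-1 : ℂ) ^ (d2 + 1) * (v * Pg) := by
    rw [det_aMat d2 α γ (N - 1) x hd2, hαtop]
    rw [hgdef, hPgdef]
    field_simp
    exact mul_div_cancel_left₀ _ (hγ _)
  have h2 : g * (abarMat d1 β γ N y).det = (-1 : ℂ) ^ (d1 + 1) * (u * G2) := by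
    rw [det_abarMat d1 β γ N y hd1]
    rw [show N + (d1 : ℤ) = N + (d1 : ℤ) from rfl] at hβtopG
    rw [hβtopG]
    rw [hgdef]
    field_simp
    exact div_self (hγ _)
  set A : ℂ := (D1Mat d1 d2 α β γ N x - y • (1 : Matrix (Fin (d2+1)) (Fin (d2+1)) ℂ)).det
    with hAdef
  set B : ℂ := (D2barMat d1 d2 α β γ N y - x • (1 : Matrix (Fin (d1+1)) (Fin (d1+1)) ℂ)).det
    with hBdef
  rw [hGa, hGb] at hdetEq
  have key : (g * Pg * G2) * ((-1 : ℂ) ^ (d2 + 1) * v * A)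
      = (g * Pg * G2) * ((-1 : ℂ) ^ (d1 + 1) * u * B) := by
    linear_combination (-(g * G2 * A)) * h1 + (g * Pg * B) * h2 + (-g) * hdetEq
  have key2 : (-1 : ℂ) ^ (d2 + 1) * v * A = (-1 : ℂ) ^ (d1 + 1) * u * B :=
    mul_left_cancel₀ (mul_ne_zero (mul_ne_zero hgne hPgne) hG2ne) key
  -- convert to the stated form
  have hyD : (y • (1 : Matrix (Fin (d2+1)) (Fin (d2+1)) ℂ) - D1Mat d1 d2 α β γ N x).det
      = (-1 : ℂ) ^ (d2 + 1) * A := by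
    rw [show y • (1 : Matrix (Fin (d2+1)) (Fin (d2+1)) ℂ) - D1Mat d1 d2 α β γ N x
        = -(D1Mat d1 d2 α β γ N x - y • (1 : Matrix (Fin (d2+1)) (Fin (d2+1)) ℂ)) from
      (neg_sub _ _).symm]
    rw [Matrix.det_neg, Fintype.card_fin, hAdef]
  have hxD : (x • (1 : Matrix (Fin (d1+1)) (Fin (d1+1)) ℂ) - D2barMat d1 d2 α β γ N y).det
      = (-1 : ℂ) ^ (d1 + 1) * B := by
    rw [show x • (1 : Matrix (Fin (d1+1)) (Fin (d1+1)) ℂ) - D2barMat d1 d2 α β γ N y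
        = -(D2barMat d1 d2 α β γ N y - x • (1 : Matrix (Fin (d1+1)) (Fin (d1+1)) ℂ)) from
      (neg_sub _ _).symm]
    rw [Matrix.det_neg, Fintype.card_fin, hBdef]
  rw [hyD, hxD]
  linear_combination (-1 : ℂ) * key2

/-- Spectral duality:
`u·det(x·1 − D̲2_N(y)) = v·det(y·1 − D1_N(x))`. -/
theorem spectral_duality_D2bar_D1 (d1 d2 : ℕ) (hd1 : 1 ≤ d1) (hd2 : 1 ≤ d2)
    (α β : ℤ → ℤ → ℂ) (γ : ℤ → ℂ)
    (hαsupp : ∀ j n : ℤ, (j < -1 ∨ (d2 : ℤ) < j) → α j n = 0)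
    (hβsupp : ∀ j n : ℤ, (j < -1 ∨ (d1 : ℤ) < j) → β j n = 0)
    (hαγ : ∀ n : ℤ, α (-1) n = γ n)
    (hβγ : ∀ n : ℤ, β (-1) n = γ n)
    (hγ : ∀ n : ℤ, γ n ≠ 0)
    (u v : ℂ) (hu : u ≠ 0) (hv : v ≠ 0)
    (hαtop : ∀ n : ℤ, α (d2 : ℤ) n = v * ∏ j ∈ Finset.Icc 1 d2, γ (n - (j : ℤ)))
    (hβtop : ∀ n : ℤ, β (d1 : ℤ) n = u * ∏ j ∈ Finset.Icc 1 d1, γ (n - (j : ℤ)))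
    (N : ℤ) (x y : ℂ) :
    u * (x • (1 : Matrix (Fin (d1 + 1)) (Fin (d1 + 1)) ℂ)
          - D2barMat d1 d2 α β γ N y).det =
      v * (y • (1 : Matrix (Fin (d2 + 1)) (Fin (d2 + 1)) ℂ)
          - D1Mat d1 d2 α β γ N x).det := by
  exact spectral_duality_aux d1 d2 hd1 hd2 α β γ hαsupp hβsupp hαγ hβγ hγ u v hu hv hαtop hβtop N x y
end
end
end

section
/- Let K ≥ 1 and let t ↦ (β_j(n,t), γ(n,t)) and t ↦ U_j(n,t) (0 ≤ j ≤ K) be differentiable families, satisfying the entrywise deformation equation ∂_t P_{n,m}(t) = −Σ_k (P_{n,k}(t)·U_{k,m}(t) − U_{n,k}(t)·P_{k,m}(t)) for all n, m ∈ ℤ and all t, where P_{n,m}(t) = −β_{m−n}(m,t) (nonzero only for −1 ≤ m−n ≤ d1) and U_{n,m}(t) = U_{m−n}(n,t) for 0 ≤ m−n ≤ K and 0 otherwise. Let ψ̄_n(y′,t) and φ_n(y,t) (n ∈ ℤ) be families, differentiable in t, satisfying for all n, t and all y′, y ∈ ℂ: y′·ψ̄_n = Σ_{j=−1}^{d1}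 β_j(n+j,t)·ψ̄_{n+j}, y·φ_n = Σ_{j=−1}^{d1} β_j(n,t)·φ_{n−j}, ∂_t ψ̄_n = Σ_{j=0}^{K} U_j(n,t)·ψ̄_{n+j}, and ∂_t φ_n = −Σ_{j=0}^{K} U_j(n−j,t)·φ_{n−j}. Define S_N(y′,y,t) := −γ(N−1,t)·ψ̄_{N−1}(y′,t)·φ_N(y,t) + Σ_{j=1}^{d1} Σ_{k=0}^{j−1} β_j(N+k,t)·ψ̄_{N+k}(y′,t)·φ_{N−j+k}(y,t). Then for every N ∈ ℤ, all y′, y ∈ ℂ and all t: ∂_t S_N(y′,y,t) = (y′ − y)·Σ_{j=1}^{K} Σ_{l=1}^{j} U_j(N−l,t)·ψ̄_{N−l+j}(y′,t)·φ_{N−l}(y,t). -/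
open BigOperators
open Finset

private def chi (N n : ℤ) : ℂ := if N ≤ n then 1 else 0

private lemma chi_eq {N n m : ℤ} (h : N ≤ n ↔ N ≤ m) : chi N n = chi N m := by
  simp only [chi]; by_cases h' : N ≤ n
  · rw [if_pos h', if_pos (h.mp h')]
  · rw [if_neg h', if_neg (fun hm => h' (h.mpr hm))]

private lemma chi_lt {N n : ℤ} (h : n < N) : chi N n = 0 := by simp [chi]; omega
private lemma chi_ge {N n : ℤ} (h : N ≤ n) : chi N n = 1 := by simp [chi]; omega


private lemma sum3_swap23 (R : Finset ℤ) (g : ℤ → ℤ → ℤ → ℂ) :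
    ∑ n ∈ R, ∑ m ∈ R, ∑ k ∈ R, g n m k = ∑ n ∈ R, ∑ m ∈ R, ∑ k ∈ R, g n k m :=
  Finset.sum_congr rfl (fun _ _ => Finset.sum_comm)

private lemma sum3_swap13 (R : Finset ℤ) (g : ℤ → ℤ → ℤ → ℂ) :
    ∑ n ∈ R, ∑ m ∈ R, ∑ k ∈ R, g n m k = ∑ n ∈ R, ∑ m ∈ R, ∑ k ∈ R, g k m n :=
  calc ∑ n ∈ R, ∑ m ∈ R, ∑ k ∈ R, g n m k
      = ∑ m ∈ R, ∑ n ∈ R, ∑ k ∈ R, g n m k := Finset.sum_comm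
    _ = ∑ m ∈ R, ∑ k ∈ R, ∑ n ∈ R, g n m k := Finset.sum_congr rfl (fun _ _ => Finset.sum_comm)
    _ = ∑ k ∈ R, ∑ m ∈ R, ∑ n ∈ R, g n m k := Finset.sum_comm


private lemma deriv_mul3 {a b c : ℝ → ℂ} {t : ℝ} (ha : DifferentiableAt ℝ a t)
    (hb : DifferentiableAt ℝ b t) (hc : DifferentiableAt ℝ c t) :
    deriv (fun s => a s * b s * c s) t
      = deriv a t * b t * c t + a t * deriv b t * c t + a t * b t * deriv c t := by
  rw [deriv_fun_mul (ha.fun_mul hb) hc, deriv_fun_mul ha hb]; ring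

private lemma key (d1 K : ℕ) (hd1 : 1 ≤ d1) (hK : 1 ≤ K)
    (b db u : ℤ → ℤ → ℂ) (p dp f df : ℤ → ℂ) (y' y : ℂ) (N : ℤ)
    (hbs : ∀ j n : ℤ, (j < -1 ∨ (d1 : ℤ) < j) → b j n = 0)
    (hdbs : ∀ j n : ℤ, (j < -1 ∨ (d1 : ℤ) < j) → db j n = 0)
    (hus : ∀ j n : ℤ, (j < 0 ∨ (K : ℤ) < j) → u j n = 0)
    (hdP : ∀ n m : ℤ, db (m - n) m =
      ∑ k ∈ Finset.Icc (n - 1) (n + (d1 : ℤ) + (K : ℤ)),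
          (u (k - n) n * b (m - k) m - b (k - n) k * u (m - k) k))
    (hrp : ∀ n : ℤ, y' * p n = ∑ j ∈ Finset.Icc (-1 : ℤ) (d1 : ℤ), b j (n + j) * p (n + j))
    (hrf : ∀ n : ℤ, y * f n = ∑ j ∈ Finset.Icc (-1 : ℤ) (d1 : ℤ), b j n * f (n - j))
    (hdp : ∀ n : ℤ, dp n = ∑ j ∈ Finset.Icc (0 : ℤ) (K : ℤ), u j n * p (n + j))
    (hdf : ∀ n : ℤ, df n = -∑ j ∈ Finset.Icc (0 : ℤ) (K : ℤ), u j (n - j) * f (n - j)) :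
    -(db (-1) (N-1) * p (N-1) * f N + b (-1) (N-1) * dp (N-1) * f N
        + b (-1) (N-1) * p (N-1) * df N)
      + ∑ j ∈ Finset.Icc (1 : ℤ) (d1 : ℤ), ∑ k ∈ Finset.Icc (0 : ℤ) (j - 1),
          (db j (N + k) * p (N + k) * f (N - j + k)
            + b j (N + k) * dp (N + k) * f (N - j + k)
            + b j (N + k) * p (N + k) * df (N - j + k))
      = (y' - y) * ∑ j ∈ Finset.Icc (1 : ℤ) (K : ℤ), ∑ l ∈ Finset.Icc (1 : ℤ) j,
          u j (N - l) * p (N - l + j) * f (N - l) := by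
  set C : ℤ := (d1 : ℤ) + (K : ℤ) + 2 with hCdef
  set R : Finset ℤ := Finset.Icc (N - C) (N + C) with hRdef
  have hCpos : (d1 : ℤ) ≥ 1 := by exact_mod_cast hd1
  have hKpos : (K : ℤ) ≥ 1 := by exact_mod_cast hK
  -- the three pieces of the "G" summand
  set G : ℤ → ℤ → ℂ := fun n m =>
    -(db (m-n) m) * p m * f n + -(b (m-n) m) * dp m * f n + -(b (m-n) m) * p m * df n with hGdef
  -- G vanishes off the band -1 ≤ m-n ≤ d1
  have hGband : ∀ n m : ℤ, (m - n < -1 ∨ (d1:ℤ) < m - n) → G n m = 0 := by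
    intro n m h
    simp only [hGdef, hbs _ _ h, hdbs _ _ h]; ring
  ------------------------------------------------------------------
  -- STEP A : LHS = ∑_{m∈R} ∑_{n∈R} (χ n - χ m) * G n m
  ------------------------------------------------------------------
  have stepA :
      -(db (-1) (N-1) * p (N-1) * f N + b (-1) (N-1) * dp (N-1) * f N
          + b (-1) (N-1) * p (N-1) * df N)
        + ∑ j ∈ Finset.Icc (1 : ℤ) (d1 : ℤ), ∑ k ∈ Finset.Icc (0 : ℤ) (j - 1),
            (db j (N + k) * p (N + k) * f (N - j + k)
              + b j (N + k) * dp (N + k) * f (N - j + k)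
              + b j (N + k) * p (N + k) * df (N - j + k))
      = ∑ m ∈ R, ∑ n ∈ R, (chi N n - chi N m) * G n m := by
    have hG0 : G N (N-1) = -(db (-1) (N-1) * p (N-1) * f N + b (-1) (N-1) * dp (N-1) * f N
        + b (-1) (N-1) * p (N-1) * df N) := by
      simp only [hGdef]
      rw [show N - 1 - N = (-1 : ℤ) by ring]
      ring
    have htri :
        ∑ j ∈ Finset.Icc (1 : ℤ) (d1 : ℤ), ∑ k ∈ Finset.Icc (0 : ℤ) (j - 1),
            (db j (N + k) * p (N + k) * f (N - j + k)
              + b j (N + k) * dp (N + k) * f (N - j + k)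
              + b j (N + k) * p (N + k) * df (N - j + k))
          = ∑ m ∈ Finset.Icc N (N + (d1:ℤ) - 1), ∑ n ∈ Finset.Icc (m - (d1:ℤ)) (N - 1), -G n m := by
      rw [Finset.sum_sigma', Finset.sum_sigma']
      refine Finset.sum_nbij' (fun x => ⟨N + x.2, N + x.2 - x.1⟩)
        (fun x => ⟨x.1 - x.2, x.1 - N⟩) ?_ ?_ ?_ ?_ ?_
      · rintro ⟨j, k⟩ hx
        simp only [Finset.mem_sigma, Finset.mem_Icc] at *; omega
      · rintro ⟨m, n⟩ hx
        simp only [Finset.mem_sigma, Finset.mem_Icc] at *; omega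
      · rintro ⟨j, k⟩ hx
        simp only [Finset.mem_sigma, Finset.mem_Icc] at hx
        dsimp only
        rw [show N + k - (N + k - j) = j by ring, show N + k - N = k by ring]
      · rintro ⟨m, n⟩ hx
        simp only [Finset.mem_sigma, Finset.mem_Icc] at hx
        dsimp only
        rw [show N + (m - N) = m by ring, show m - (m - n) = n by ring]
      · rintro ⟨j, k⟩ hx
        simp only [Finset.mem_sigma, Finset.mem_Icc] at hx
        dsimp only
        simp only [hGdef]
        rw [show N + k - (N + k - j) = j by ring, show N - j + k = N + k - j by ring]
        ring
    have hm_insert : Finset.Icc (N-1) (N + (d1:ℤ) - 1)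
        = insert (N-1) (Finset.Icc N (N + (d1:ℤ) - 1)) := by
      ext a; simp only [Finset.mem_Icc, Finset.mem_insert]; omega
    have hmN1 : ∑ n ∈ R, (chi N n - chi N (N-1)) * G n (N-1) = G N (N-1) := by
      rw [Finset.sum_eq_single_of_mem N
        (by rw [hRdef]; simp only [Finset.mem_Icc]; omega)]
      · rw [chi_ge (le_refl N), chi_lt (by omega : N - 1 < N)]; ring
      · intro n hn hne
        by_cases hb : (N-1) - n < -1 ∨ (d1:ℤ) < (N-1) - n
        · rw [hGband _ _ hb, mul_zero]
        · push_neg at hb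
          rw [chi_eq (show N ≤ n ↔ N ≤ N - 1 by omega), sub_self, zero_mul]
    have hmain : ∀ m ∈ Finset.Icc N (N + (d1:ℤ) - 1),
        ∑ n ∈ R, (chi N n - chi N m) * G n m
          = ∑ n ∈ Finset.Icc (m - (d1:ℤ)) (N-1), -G n m := by
      intro m hm; rw [Finset.mem_Icc] at hm
      have hsub : Finset.Icc (m - (d1:ℤ)) (N-1) ⊆ R := by
        rw [hRdef]; intro x hx; rw [Finset.mem_Icc] at *; omega
      have hz : ∀ n ∈ R, n ∉ Finset.Icc (m - (d1:ℤ)) (N-1) →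
          (chi N n - chi N m) * G n m = 0 := by
        intro n hn hnot
        rw [Finset.mem_Icc] at hnot
        by_cases hb : m - n < -1 ∨ (d1:ℤ) < m - n
        · rw [hGband _ _ hb, mul_zero]
        · push_neg at hb
          rw [chi_eq (show N ≤ n ↔ N ≤ m by omega), sub_self, zero_mul]
      rw [← Finset.sum_subset hsub hz]
      apply Finset.sum_congr rfl
      intro n hn; rw [Finset.mem_Icc] at hn
      rw [chi_lt (by omega : n < N), chi_ge (by omega : N ≤ m)]; ring
    calc -(db (-1) (N-1) * p (N-1) * f N + b (-1) (N-1) * dp (N-1) * f N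
            + b (-1) (N-1) * p (N-1) * df N)
          + ∑ j ∈ Finset.Icc (1 : ℤ) (d1 : ℤ), ∑ k ∈ Finset.Icc (0 : ℤ) (j - 1),
              (db j (N + k) * p (N + k) * f (N - j + k)
                + b j (N + k) * dp (N + k) * f (N - j + k)
                + b j (N + k) * p (N + k) * df (N - j + k))
        = G N (N-1) + ∑ m ∈ Finset.Icc N (N + (d1:ℤ) - 1),
            ∑ n ∈ Finset.Icc (m - (d1:ℤ)) (N-1), -G n m := by rw [htri, hG0]
      _ = ∑ m ∈ Finset.Icc (N-1) (N + (d1:ℤ) - 1), ∑ n ∈ R, (chi N n - chi N m) * G n m := by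
          rw [hm_insert, Finset.sum_insert (by simp only [Finset.mem_Icc]; omega), hmN1]
          congr 1
          exact (Finset.sum_congr rfl hmain).symm
      _ = ∑ m ∈ R, ∑ n ∈ R, (chi N n - chi N m) * G n m := by
          refine Finset.sum_subset ?_ ?_
          · rw [hRdef]; intro x hx; rw [Finset.mem_Icc] at *; omega
          · intro m hm hnot
            rw [Finset.mem_Icc] at hnot
            apply Finset.sum_eq_zero; intro n hn
            by_cases hb : m - n < -1 ∨ (d1:ℤ) < m - n
            · rw [hGband _ _ hb, mul_zero]
            · push_neg at hb
              rw [chi_eq (show N ≤ n ↔ N ≤ m by omega), sub_self, zero_mul]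

  ------------------------------------------------------------------
  -- STEP B : ∑_{n∈R} ∑_{m∈R} (χ n - χ m) * G n m = (y'-y) * W
  ------------------------------------------------------------------
  have stepB :
      ∑ m ∈ R, ∑ n ∈ R, (chi N n - chi N m) * G n m
        = (y' - y) * ∑ n ∈ R, ∑ m ∈ R, (chi N m - chi N n) * (u (m-n) n * p m * f n) := by
    have base : ∀ n ∈ R, ∀ m ∈ R, (chi N n - chi N m) * (-(db (m-n) m))
        = (chi N n - chi N m) *
            ∑ k ∈ R, (b (k-n) k * u (m-k) k - u (k-n) n * b (m-k) m) := by
      intro n hn m hm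
      by_cases hc : N ≤ n ↔ N ≤ m
      · rw [chi_eq hc, sub_self, zero_mul, zero_mul]
      · rw [hRdef, Finset.mem_Icc] at hn hm
        by_cases hcase : N - (d1:ℤ) - (K:ℤ) ≤ n ∧ n ≤ N
        · congr 1
          have hsub : Finset.Icc (n-1) (n + (d1:ℤ) + (K:ℤ)) ⊆ R := by
            rw [hRdef]; intro x hx; rw [Finset.mem_Icc] at *; omega
          have hz : ∀ x ∈ R, x ∉ Finset.Icc (n-1) (n + (d1:ℤ) + (K:ℤ)) →
              b (x-n) x * u (m-x) x - u (x-n) n * b (m-x) m = 0 := by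
            intro x hx hxn; rw [Finset.mem_Icc] at hxn
            rw [hbs (x-n) x (by omega), hus (x-n) n (by omega)]; ring
          rw [← Finset.sum_subset hsub hz, hdP n m, ← neg_one_mul, Finset.mul_sum]
          exact Finset.sum_congr rfl (fun k _ => by ring)
        · have h0 : ∑ k ∈ R, (b (k-n) k * u (m-k) k - u (k-n) n * b (m-k) m) = 0 := by
            apply Finset.sum_eq_zero; intro k hk
            rw [hRdef, Finset.mem_Icc] at hk
            by_cases h1 : k - n < -1 ∨ (d1:ℤ) < k - n
            · by_cases h2 : k - n < 0 ∨ (K:ℤ) < k - n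
              · rw [hbs _ _ h1, hus _ _ h2]; ring
              · rw [hbs _ _ h1, hbs (m-k) m (by omega)]; ring
            · by_cases h2 : k - n < 0 ∨ (K:ℤ) < k - n
              · rw [hus _ _ h2, hus (m-k) k (by omega)]; ring
              · rw [hus (m-k) k (by omega), hbs (m-k) m (by omega)]; ring
          rw [h0, mul_zero, hdbs (m-n) m (by omega), neg_zero, mul_zero]
    have k1 : ∀ n ∈ R, ∀ m ∈ R, (chi N n - chi N m) * (-(db (m-n) m) * p m * f n)
        = ∑ k ∈ R, (chi N n - chi N m) *
            ((b (k-n) k * u (m-k) k - u (k-n) n * b (m-k) m) * (p m * f n)) := by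
      intro n hn m hm
      calc (chi N n - chi N m) * (-(db (m-n) m) * p m * f n)
          = ((chi N n - chi N m) * (-(db (m-n) m))) * (p m * f n) := by ring
        _ = ((chi N n - chi N m) *
              ∑ k ∈ R, (b (k-n) k * u (m-k) k - u (k-n) n * b (m-k) m)) * (p m * f n) := by
            rw [base n hn m hm]
        _ = _ := by
            rw [Finset.mul_sum, Finset.sum_mul]
            exact Finset.sum_congr rfl (fun k _ => by ring)
    have k2 : ∀ n ∈ R, ∀ m ∈ R, (chi N n - chi N m) * (-(b (m-n) m) * dp m * f n)
        = ∑ k ∈ R, (chi N n - chi N m) * (-(b (m-n) m)) * (u (k-m) m * p k) * f n := by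
      intro n hn m hm
      by_cases hb : m - n < -1 ∨ (d1:ℤ) < m - n
      · rw [hbs _ _ hb, Finset.sum_eq_zero (fun k _ => by ring)]; ring
      · by_cases hc : N ≤ n ↔ N ≤ m
        · rw [chi_eq hc, Finset.sum_eq_zero (fun k _ => by ring)]; ring
        · rw [hRdef, Finset.mem_Icc] at hn hm
          push_neg at hb
          have hdpm : dp m = ∑ k ∈ R, u (k-m) m * p k := by
            have h1 : dp m = ∑ k ∈ Finset.Icc m (m + (K:ℤ)), u (k-m) m * p k := by
              rw [hdp m]
              refine Finset.sum_nbij' (fun j => m + j) (fun k => k - m) ?_ ?_ ?_ ?_ ?_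
              · intro j hj; simp only [Finset.mem_Icc] at *; omega
              · intro k hk; simp only [Finset.mem_Icc] at *; omega
              · intro j _; rw [show m + j - m = j by ring]
              · intro k _; rw [show m + (k - m) = k by ring]
              · intro j hj; rw [show m + j - m = j by ring]
            rw [h1]
            apply Finset.sum_subset
            · rw [hRdef]; intro x hx; rw [Finset.mem_Icc] at *; omega
            · intro k _ hkn; rw [Finset.mem_Icc] at hkn
              rw [hus (k-m) m (by omega)]; ring
          rw [hdpm,
            show (chi N n - chi N m) * (-(b (m-n) m) * (∑ k ∈ R, u (k-m) m * p k) * f n)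
              = ((chi N n - chi N m) * (-(b (m-n) m)) * f n) * (∑ k ∈ R, u (k-m) m * p k)
              from by ring,
            Finset.mul_sum]
          exact Finset.sum_congr rfl (fun k _ => by ring)
    have k3 : ∀ n ∈ R, ∀ m ∈ R, (chi N n - chi N m) * (-(b (m-n) m) * p m * df n)
        = ∑ k ∈ R, (chi N n - chi N m) * (b (m-n) m) * (u (n-k) k * p m * f k) := by
      intro n hn m hm
      by_cases hb : m - n < -1 ∨ (d1:ℤ) < m - n
      · rw [hbs _ _ hb, Finset.sum_eq_zero (fun k _ => by ring)]; ring
      · by_cases hc : N ≤ n ↔ N ≤ m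
        · rw [chi_eq hc, Finset.sum_eq_zero (fun k _ => by ring)]; ring
        · rw [hRdef, Finset.mem_Icc] at hn hm
          push_neg at hb
          have hdfn : df n = -∑ k ∈ R, u (n-k) k * f k := by
            have h1 : df n = -∑ k ∈ Finset.Icc (n - (K:ℤ)) n, u (n-k) k * f k := by
              rw [hdf n]; congr 1
              refine Finset.sum_nbij' (fun j => n - j) (fun k => n - k) ?_ ?_ ?_ ?_ ?_
              · intro j hj; simp only [Finset.mem_Icc] at *; omega
              · intro k hk; simp only [Finset.mem_Icc] at *; omega
              · intro j _; rw [show n - (n - j) = j by ring]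
              · intro k _; rw [show n - (n - k) = k by ring]
              · intro j hj; rw [show n - (n - j) = j by ring]
            rw [h1]; congr 1
            apply Finset.sum_subset
            · rw [hRdef]; intro x hx; rw [Finset.mem_Icc] at *; omega
            · intro k _ hkn; rw [Finset.mem_Icc] at hkn
              rw [hus (n-k) k (by omega)]; ring
          rw [hdfn,
            show (chi N n - chi N m) * (-(b (m-n) m) * p m * -∑ k ∈ R, u (n-k) k * f k)
              = ((chi N n - chi N m) * (b (m-n) m) * p m) * (∑ k ∈ R, u (n-k) k * f k)
              from by ring,
            Finset.mul_sum]
          exact Finset.sum_congr rfl (fun k _ => by ring)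
    have key4 : ∀ n ∈ R, ∀ m ∈ R,
        (chi N n - chi N m) * u (m-n) n * p m * (∑ k ∈ R, b (n-k) n * f k)
          = (chi N n - chi N m) * u (m-n) n * p m * (y * f n) := by
      intro n hn m hm
      by_cases hu : m - n < 0 ∨ (K:ℤ) < m - n
      · rw [hus _ _ hu]; ring
      · by_cases hc : N ≤ n ↔ N ≤ m
        · rw [chi_eq hc]; ring
        · rw [hRdef, Finset.mem_Icc] at hn hm
          have hval : ∑ k ∈ R, b (n-k) n * f k = y * f n := by
            have h1 : y * f n = ∑ k ∈ Finset.Icc (n - (d1:ℤ)) (n+1), b (n-k) n * f k := by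
              rw [hrf n]
              refine Finset.sum_nbij' (fun j => n - j) (fun k => n - k) ?_ ?_ ?_ ?_ ?_
              · intro j hj; simp only [Finset.mem_Icc] at *; omega
              · intro k hk; simp only [Finset.mem_Icc] at *; omega
              · intro j _; rw [show n - (n - j) = j by ring]
              · intro k _; rw [show n - (n - k) = k by ring]
              · intro j hj; rw [show n - (n - j) = j by ring]
            rw [h1]
            refine (Finset.sum_subset ?_ ?_).symm
            · rw [hRdef]; intro x hx; rw [Finset.mem_Icc] at *; omega
            · intro k _ hkn; rw [Finset.mem_Icc] at hkn
              rw [hbs (n-k) n (by omega)]; ring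
          rw [hval]
    have key5 : ∀ n ∈ R, ∀ m ∈ R,
        (chi N m - chi N n) * u (m-n) n * f n * (∑ k ∈ R, b (k-m) k * p k)
          = (chi N m - chi N n) * u (m-n) n * f n * (y' * p m) := by
      intro n hn m hm
      by_cases hu : m - n < 0 ∨ (K:ℤ) < m - n
      · rw [hus _ _ hu]; ring
      · by_cases hc : N ≤ n ↔ N ≤ m
        · rw [chi_eq hc]; ring
        · rw [hRdef, Finset.mem_Icc] at hn hm
          have hval : ∑ k ∈ R, b (k-m) k * p k = y' * p m := by
            have h1 : y' * p m = ∑ k ∈ Finset.Icc (m-1) (m + (d1:ℤ)), b (k-m) k * p k := by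
              rw [hrp m]
              refine Finset.sum_nbij' (fun j => m + j) (fun k => k - m) ?_ ?_ ?_ ?_ ?_
              · intro j hj; simp only [Finset.mem_Icc] at *; omega
              · intro k hk; simp only [Finset.mem_Icc] at *; omega
              · intro j _; rw [show m + j - m = j by ring]
              · intro k _; rw [show m + (k - m) = k by ring]
              · intro j hj; rw [show m + j - m = j by ring]
            rw [h1]
            refine (Finset.sum_subset ?_ ?_).symm
            · rw [hRdef]; intro x hx; rw [Finset.mem_Icc] at *; omega
            · intro k _ hkn; rw [Finset.mem_Icc] at hkn
              rw [hbs (k-m) k (by omega)]; ring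
          rw [hval]
    have e2 : (∑ n ∈ R, ∑ m ∈ R, ∑ k ∈ R,
          (chi N n - chi N m) * (-(b (m-n) m)) * (u (k-m) m * p k) * f n)
        = ∑ n ∈ R, ∑ m ∈ R, ∑ k ∈ R,
          (chi N n - chi N k) * (-(b (k-n) k)) * (u (m-k) k * p m) * f n :=
      sum3_swap23 R (fun n m k => (chi N n - chi N m) * (-(b (m-n) m)) * (u (k-m) m * p k) * f n)
    have e3 : (∑ n ∈ R, ∑ m ∈ R, ∑ k ∈ R,
          (chi N n - chi N m) * (b (m-n) m) * (u (n-k) k * p m * f k))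
        = ∑ n ∈ R, ∑ m ∈ R, ∑ k ∈ R,
          (chi N k - chi N m) * (b (m-k) m) * (u (k-n) n * p m * f n) :=
      sum3_swap13 R (fun n m k => (chi N n - chi N m) * (b (m-n) m) * (u (n-k) k * p m * f k))
    have e4 : (∑ n ∈ R, ∑ m ∈ R, ∑ k ∈ R,
          (chi N k - chi N m) * (b (k-n) k * u (m-k) k * p m * f n))
        = ∑ n ∈ R, ∑ m ∈ R, ∑ k ∈ R,
          (chi N n - chi N m) * (b (n-k) n * u (m-n) n * p m * f k) :=
      sum3_swap13 R (fun n m k => (chi N k - chi N m) * (b (k-n) k * u (m-k) k * p m * f n))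
    have e5 : (∑ n ∈ R, ∑ m ∈ R, ∑ k ∈ R,
          (chi N k - chi N n) * (u (k-n) n * b (m-k) m * p m * f n))
        = ∑ n ∈ R, ∑ m ∈ R, ∑ k ∈ R,
          (chi N m - chi N n) * (u (m-n) n * b (k-m) k * p k * f n) :=
      sum3_swap23 R (fun n m k => (chi N k - chi N n) * (u (k-n) n * b (m-k) m * p m * f n))
    calc ∑ m ∈ R, ∑ n ∈ R, (chi N n - chi N m) * G n m
        = ∑ n ∈ R, ∑ m ∈ R, (chi N n - chi N m) * G n m := Finset.sum_comm
      _ = ∑ n ∈ R, ∑ m ∈ R,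
            ((∑ k ∈ R, (chi N n - chi N m) *
                ((b (k-n) k * u (m-k) k - u (k-n) n * b (m-k) m) * (p m * f n)))
              + (∑ k ∈ R, (chi N n - chi N m) * (-(b (m-n) m)) * (u (k-m) m * p k) * f n)
              + (∑ k ∈ R, (chi N n - chi N m) * (b (m-n) m) * (u (n-k) k * p m * f k))) := by
          refine Finset.sum_congr rfl fun n hn => Finset.sum_congr rfl fun m hm => ?_
          have hsplit : (chi N n - chi N m) * G n m
              = (chi N n - chi N m) * (-(db (m-n) m) * p m * f n)
                + (chi N n - chi N m) * (-(b (m-n) m) * dp m * f n)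
                + (chi N n - chi N m) * (-(b (m-n) m) * p m * df n) := by
            simp only [hGdef]; ring
          rw [hsplit, k1 n hn m hm, k2 n hn m hm, k3 n hn m hm]
      _ = (∑ n ∈ R, ∑ m ∈ R, ∑ k ∈ R, (chi N n - chi N m) *
              ((b (k-n) k * u (m-k) k - u (k-n) n * b (m-k) m) * (p m * f n)))
          + (∑ n ∈ R, ∑ m ∈ R, ∑ k ∈ R,
              (chi N n - chi N m) * (-(b (m-n) m)) * (u (k-m) m * p k) * f n)
          + (∑ n ∈ R, ∑ m ∈ R, ∑ k ∈ R,
              (chi N n - chi N m) * (b (m-n) m) * (u (n-k) k * p m * f k)) := by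
          simp only [Finset.sum_add_distrib]
      _ = (∑ n ∈ R, ∑ m ∈ R, ∑ k ∈ R, (chi N n - chi N m) *
              ((b (k-n) k * u (m-k) k - u (k-n) n * b (m-k) m) * (p m * f n)))
          + (∑ n ∈ R, ∑ m ∈ R, ∑ k ∈ R,
              (chi N n - chi N k) * (-(b (k-n) k)) * (u (m-k) k * p m) * f n)
          + (∑ n ∈ R, ∑ m ∈ R, ∑ k ∈ R,
              (chi N k - chi N m) * (b (m-k) m) * (u (k-n) n * p m * f n)) := by
          rw [e2, e3]
      _ = ∑ n ∈ R, ∑ m ∈ R, ∑ k ∈ R,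
            ((chi N k - chi N m) * (b (k-n) k * u (m-k) k * p m * f n)
              + (chi N k - chi N n) * (u (k-n) n * b (m-k) m * p m * f n)) := by
          simp only [← Finset.sum_add_distrib]
          refine Finset.sum_congr rfl fun n _ => Finset.sum_congr rfl fun m _ =>
            Finset.sum_congr rfl fun k _ => ?_
          ring
      _ = (∑ n ∈ R, ∑ m ∈ R, ∑ k ∈ R,
            (chi N k - chi N m) * (b (k-n) k * u (m-k) k * p m * f n))
          + (∑ n ∈ R, ∑ m ∈ R, ∑ k ∈ R,
            (chi N k - chi N n) * (u (k-n) n * b (m-k) m * p m * f n)) := by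
          simp only [Finset.sum_add_distrib]
      _ = (∑ n ∈ R, ∑ m ∈ R, ∑ k ∈ R,
            (chi N n - chi N m) * (b (n-k) n * u (m-n) n * p m * f k))
          + (∑ n ∈ R, ∑ m ∈ R, ∑ k ∈ R,
            (chi N m - chi N n) * (u (m-n) n * b (k-m) k * p k * f n)) := by
          rw [e4, e5]
      _ = (∑ n ∈ R, ∑ m ∈ R, (chi N n - chi N m) * u (m-n) n * p m * (y * f n))
          + (∑ n ∈ R, ∑ m ∈ R, (chi N m - chi N n) * u (m-n) n * f n * (y' * p m)) := by
          congr 1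
          · refine Finset.sum_congr rfl fun n hn => Finset.sum_congr rfl fun m hm => ?_
            calc ∑ k ∈ R, (chi N n - chi N m) * (b (n-k) n * u (m-n) n * p m * f k)
                = (chi N n - chi N m) * u (m-n) n * p m * (∑ k ∈ R, b (n-k) n * f k) := by
                  rw [Finset.mul_sum]
                  exact Finset.sum_congr rfl fun k _ => by ring
              _ = _ := key4 n hn m hm
          · refine Finset.sum_congr rfl fun n hn => Finset.sum_congr rfl fun m hm => ?_
            calc ∑ k ∈ R, (chi N m - chi N n) * (u (m-n) n * b (k-m) k * p k * f n)
                = (chi N m - chi N n) * u (m-n) n * f n * (∑ k ∈ R, b (k-m) k * p k) := by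
                  rw [Finset.mul_sum]
                  exact Finset.sum_congr rfl fun k _ => by ring
              _ = _ := key5 n hn m hm
      _ = (y' - y) * ∑ n ∈ R, ∑ m ∈ R, (chi N m - chi N n) * (u (m-n) n * p m * f n) := by
          rw [Finset.mul_sum, ← Finset.sum_add_distrib]
          refine Finset.sum_congr rfl fun n _ => ?_
          rw [Finset.mul_sum, ← Finset.sum_add_distrib]
          refine Finset.sum_congr rfl fun m _ => ?_
          ring

  ------------------------------------------------------------------
  -- STEP C : W = RHS double sum
  ------------------------------------------------------------------
  have stepC :
      ∑ n ∈ R, ∑ m ∈ R, (chi N m - chi N n) * (u (m-n) n * p m * f n)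
        = ∑ j ∈ Finset.Icc (1 : ℤ) (K : ℤ), ∑ l ∈ Finset.Icc (1 : ℤ) j,
            u j (N - l) * p (N - l + j) * f (N - l) := by
    have c3 :
        ∑ j ∈ Finset.Icc (1 : ℤ) (K : ℤ), ∑ l ∈ Finset.Icc (1 : ℤ) j,
            u j (N - l) * p (N - l + j) * f (N - l)
          = ∑ n ∈ Finset.Icc (N - (K:ℤ)) (N - 1), ∑ m ∈ Finset.Icc N (n + (K:ℤ)),
              u (m - n) n * p m * f n := by
      rw [Finset.sum_sigma', Finset.sum_sigma']
      refine Finset.sum_nbij' (fun x => ⟨N - x.2, N - x.2 + x.1⟩)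
        (fun x => ⟨x.2 - x.1, N - x.1⟩) ?_ ?_ ?_ ?_ ?_
      · rintro ⟨j, l⟩ hx; simp only [Finset.mem_sigma, Finset.mem_Icc] at *; omega
      · rintro ⟨n, m⟩ hx; simp only [Finset.mem_sigma, Finset.mem_Icc] at *; omega
      · rintro ⟨j, l⟩ hx; dsimp only
        rw [show N - l + j - (N - l) = j by ring, show N - (N - l) = l by ring]
      · rintro ⟨n, m⟩ hx; dsimp only
        rw [show N - (N - n) = n by ring]
        rw [show n + (m - n) = m by ring]
      · rintro ⟨j, l⟩ hx; dsimp only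
        rw [show N - l + j - (N - l) = j by ring]
    have hz1 : ∀ n : ℤ, n < N → ∀ m ∈ R, m ∉ Finset.Icc N (n + (K:ℤ)) →
        (chi N m - chi N n) * (u (m-n) n * p m * f n) = 0 := by
      intro n hn m hm hnot; rw [Finset.mem_Icc] at hnot
      by_cases hu : m - n < 0 ∨ (K:ℤ) < m - n
      · rw [hus _ _ hu]; ring
      · push_neg at hu
        rw [chi_eq (show N ≤ m ↔ N ≤ n by omega), sub_self, zero_mul]
    calc ∑ n ∈ R, ∑ m ∈ R, (chi N m - chi N n) * (u (m-n) n * p m * f n)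
        = ∑ n ∈ Finset.Icc (N-(K:ℤ)) (N-1), ∑ m ∈ R,
            (chi N m - chi N n) * (u (m-n) n * p m * f n) := by
          refine (Finset.sum_subset ?_ ?_).symm
          · rw [hRdef]; intro x hx; rw [Finset.mem_Icc] at *; omega
          · intro n hn hnot; rw [Finset.mem_Icc] at hnot
            apply Finset.sum_eq_zero; intro m hm
            by_cases hu : m - n < 0 ∨ (K:ℤ) < m - n
            · rw [hus _ _ hu]; ring
            · push_neg at hu
              rw [chi_eq (show N ≤ m ↔ N ≤ n by omega), sub_self, zero_mul]
      _ = ∑ n ∈ Finset.Icc (N-(K:ℤ)) (N-1), ∑ m ∈ Finset.Icc N (n+(K:ℤ)),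
            u (m-n) n * p m * f n := by
          apply Finset.sum_congr rfl; intro n hn; rw [Finset.mem_Icc] at hn
          have hs : Finset.Icc N (n+(K:ℤ)) ⊆ R := by
            rw [hRdef]; intro x hx; rw [Finset.mem_Icc] at *; omega
          rw [← Finset.sum_subset hs (hz1 n (by omega))]
          apply Finset.sum_congr rfl; intro m hm; rw [Finset.mem_Icc] at hm
          rw [chi_ge (by omega : N ≤ m), chi_lt (by omega : n < N)]; ring
      _ = ∑ j ∈ Finset.Icc (1 : ℤ) (K : ℤ), ∑ l ∈ Finset.Icc (1 : ℤ) j,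
            u j (N - l) * p (N - l + j) * f (N - l) := c3.symm

  rw [stepA, stepB, stepC]


/-- Deformation of the duality pairing: `∂ₜ S_N = (y' − y)·Σ_j Σ_l U_j(N−l)·ψ̄_{N−l+j}·φ_{N−l}`. -/
theorem pairing_deformation (d1 d2 K : ℕ)
    (hd1 : 1 ≤ d1) (hd2 : 1 ≤ d2) (hK : 1 ≤ K)
    (β : ℤ → ℤ → ℝ → ℂ) (γ : ℤ → ℝ → ℂ) (U : ℤ → ℤ → ℝ → ℂ)
    (hβsupp : ∀ (j n : ℤ) (t : ℝ), (j < -1 ∨ (d1 : ℤ) < j) → β j n t = 0)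
    (hβγ : ∀ (n : ℤ) (t : ℝ), β (-1) n t = γ n t)
    (hUsupp : ∀ (j n : ℤ) (t : ℝ), (j < 0 ∨ (K : ℤ) < j) → U j n t = 0)
    (hβdiff : ∀ j n : ℤ, Differentiable ℝ (β j n))
    (hdefP : ∀ (n m : ℤ) (t : ℝ),
      deriv (fun s => -β (m - n) m s) t =
        -∑ k ∈ Finset.Icc (n - 1) (n + (d1 : ℤ) + (K : ℤ)),
          ((-β (k - n) k t) * U (m - k) k t - U (k - n) n t * (-β (m - k) m t)))
    (ψb φ : ℤ → ℂ → ℝ → ℂ)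
    (hψbdiff : ∀ (n : ℤ) (y' : ℂ), Differentiable ℝ (ψb n y'))
    (hφdiff : ∀ (n : ℤ) (y : ℂ), Differentiable ℝ (φ n y))
    (hrec_ψb : ∀ (n : ℤ) (y' : ℂ) (t : ℝ),
      y' * ψb n y' t = ∑ j ∈ Finset.Icc (-1 : ℤ) (d1 : ℤ), β j (n + j) t * ψb (n + j) y' t)
    (hrec_φ : ∀ (n : ℤ) (y : ℂ) (t : ℝ),
      y * φ n y t = ∑ j ∈ Finset.Icc (-1 : ℤ) (d1 : ℤ), β j n t * φ (n - j) y t)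
    (hdef_ψb : ∀ (n : ℤ) (y' : ℂ) (t : ℝ),
      deriv (ψb n y') t = ∑ j ∈ Finset.Icc (0 : ℤ) (K : ℤ), U j n t * ψb (n + j) y' t)
    (hdef_φ : ∀ (n : ℤ) (y : ℂ) (t : ℝ),
      deriv (φ n y) t = -∑ j ∈ Finset.Icc (0 : ℤ) (K : ℤ), U j (n - j) t * φ (n - j) y t)
    (N : ℤ) (y' y : ℂ) (t : ℝ) :
    deriv (fun s =>
        -(γ (N - 1) s * ψb (N - 1) y' s * φ N y s) +
          ∑ j ∈ Finset.Icc (1 : ℤ) (d1 : ℤ), ∑ k ∈ Finset.Icc (0 : ℤ) (j - 1),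
            β j (N + k) s * ψb (N + k) y' s * φ (N - j + k) y s) t =
      (y' - y) *
        ∑ j ∈ Finset.Icc (1 : ℤ) (K : ℤ), ∑ l ∈ Finset.Icc (1 : ℤ) j,
          U j (N - l) t * ψb (N - l + j) y' t * φ (N - l) y t := by
  have hd3 : ∀ (j n m : ℤ), DifferentiableAt ℝ (fun s => β j n s * ψb n y' s * φ m y s) t :=
    fun j n m => (((hβdiff j n).mul (hψbdiff n y')).mul (hφdiff m y)).differentiableAt
  have hfun : (fun s =>
        -(γ (N - 1) s * ψb (N - 1) y' s * φ N y s) +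
          ∑ j ∈ Finset.Icc (1 : ℤ) (d1 : ℤ), ∑ k ∈ Finset.Icc (0 : ℤ) (j - 1),
            β j (N + k) s * ψb (N + k) y' s * φ (N - j + k) y s)
      = (fun s =>
        -(β (-1) (N - 1) s * ψb (N - 1) y' s * φ N y s) +
          ∑ j ∈ Finset.Icc (1 : ℤ) (d1 : ℤ), ∑ k ∈ Finset.Icc (0 : ℤ) (j - 1),
            β j (N + k) s * ψb (N + k) y' s * φ (N - j + k) y s) := by
    funext s; rw [hβγ]
  have hBin : ∀ j ∈ Finset.Icc (1 : ℤ) (d1 : ℤ), DifferentiableAt ℝ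
      (fun s => ∑ k ∈ Finset.Icc (0 : ℤ) (j - 1),
        β j (N + k) s * ψb (N + k) y' s * φ (N - j + k) y s) t :=
    fun j _ => DifferentiableAt.fun_sum (fun k _ => hd3 _ _ _)
  have hA : DifferentiableAt ℝ (fun s => -(β (-1) (N - 1) s * ψb (N - 1) y' s * φ N y s)) t :=
    (hd3 _ _ _).neg
  have hsum2 : deriv (fun s => ∑ j ∈ Finset.Icc (1 : ℤ) (d1 : ℤ),
        ∑ k ∈ Finset.Icc (0 : ℤ) (j - 1),
          β j (N + k) s * ψb (N + k) y' s * φ (N - j + k) y s) t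
      = ∑ j ∈ Finset.Icc (1 : ℤ) (d1 : ℤ), ∑ k ∈ Finset.Icc (0 : ℤ) (j - 1),
          (deriv (β j (N + k)) t * ψb (N + k) y' t * φ (N - j + k) y t
            + β j (N + k) t * deriv (ψb (N + k) y') t * φ (N - j + k) y t
            + β j (N + k) t * ψb (N + k) y' t * deriv (φ (N - j + k) y) t) := by
    rw [deriv_fun_sum hBin]
    refine Finset.sum_congr rfl fun j _ => ?_
    rw [deriv_fun_sum (fun k _ => hd3 _ _ _)]
    exact Finset.sum_congr rfl fun k _ => deriv_mul3 ((hβdiff _ _).differentiableAt)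
      ((hψbdiff _ _).differentiableAt) ((hφdiff _ _).differentiableAt)
  have hnegA : deriv (fun s => -(β (-1) (N - 1) s * ψb (N - 1) y' s * φ N y s)) t
      = -(deriv (β (-1) (N - 1)) t * ψb (N - 1) y' t * φ N y t
          + β (-1) (N - 1) t * deriv (ψb (N - 1) y') t * φ N y t
          + β (-1) (N - 1) t * ψb (N - 1) y' t * deriv (φ N y) t) := by
    rw [deriv.fun_neg, deriv_mul3 ((hβdiff _ _).differentiableAt)
      ((hψbdiff _ _).differentiableAt) ((hφdiff _ _).differentiableAt)]
  rw [hfun, deriv_fun_add hA (DifferentiableAt.fun_sum hBin), hnegA, hsum2]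
  refine key d1 K hd1 hK (fun j n => β j n t) (fun j n => deriv (β j n) t)
    (fun j n => U j n t) (fun n => ψb n y' t) (fun n => deriv (ψb n y') t)
    (fun n => φ n y t) (fun n => deriv (φ n y) t) y' y N
    (fun j n h => hβsupp j n t h)
    (fun j n h => ?_)
    (fun j n h => hUsupp j n t h)
    (fun n m => ?_)
    (fun n => hrec_ψb n y' t) (fun n => hrec_φ n y t)
    (fun n => hdef_ψb n y' t) (fun n => hdef_φ n y t)
  · show deriv (β j n) t = 0
    have hzero : β j n = fun _ => 0 := funext (fun s => hβsupp j n s h)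
    rw [hzero]
    exact deriv_const t 0
  · show deriv (β (m - n) m) t = ∑ k ∈ Finset.Icc (n - 1) (n + (d1:ℤ) + (K:ℤ)),
        (U (k - n) n t * β (m - k) m t - β (k - n) k t * U (m - k) k t)
    have h := hdefP n m t
    rw [deriv.fun_neg] at h
    exact (neg_inj.mp h).trans (Finset.sum_congr rfl fun k _ => by ring)
end
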